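/- arXiv:0708.3609 — 8 statements merged into one kernel-verified Lean document; each statement's English description precedes it below -/
import Mathlib

section
/- A piecewise-linear orientation-preserving homeomorphism f of [0,1] is a dyadic rearrangement (i.e., maps the intervals of some dyadic subdivision linearly onto the intervals of another dyadic subdivision) if and only if all slopes of f are powers of 2 and all breakpoints of f have dyadic rational coordinates. -/
open Set

/-- A dyadic rational number. -/
def IsDyadic (x : ℝ) : Prop := ∃ (k : ℤ) (n : ℕ), x = (k : ℝ) / 2 ^ n

/-- `[u,v]` is a standard dyadic interval `[k/2^m, (k+1)/2^m]`. -/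
def IsStdDyadicInterval (u v : ℝ) : Prop :=
  ∃ (k m : ℕ), u = (k : ℝ) / 2 ^ m ∧ v = ((k : ℝ) + 1) / 2 ^ m

/-- A dyadic subdivision of `[0,1]`: a partition into standard dyadic intervals. -/
def IsDyadicSubdivision {n : ℕ} (a : Fin (n + 1) → ℝ) : Prop :=
  StrictMono a ∧ a 0 = 0 ∧ a (Fin.last n) = 1 ∧
    ∀ i : Fin n, IsStdDyadicInterval (a i.castSucc) (a i.succ)

/-- `f` is a dyadic rearrangement: it maps the intervals of one dyadic subdivision linearly
(in order) onto the intervals of another dyadic subdivision. -/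
def IsDyadicRearrangement (f : ℝ → ℝ) : Prop :=
  ∃ (n : ℕ) (a b : Fin (n + 1) → ℝ), IsDyadicSubdivision a ∧ IsDyadicSubdivision b ∧
    ∀ i : Fin n, ∃ s c : ℝ,
      (∀ x ∈ Icc (a i.castSucc) (a i.succ), f x = s * x + c) ∧
      f (a i.castSucc) = b i.castSucc ∧ f (a i.succ) = b i.succ

/-- `f` is a piecewise-linear orientation-preserving homeomorphism of `[0,1]`. -/
def IsPLHomeo (f : ℝ → ℝ) : Prop :=
  ∃ (n : ℕ) (a : Fin (n + 1) → ℝ), StrictMono a ∧ a 0 = 0 ∧ a (Fin.last n) = 1 ∧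
    ∀ i : Fin n, ∃ s c : ℝ, 0 < s ∧
      ∀ x ∈ Icc (a i.castSucc) (a i.succ), f x = s * x + c

/-- All slopes of `f` are powers of `2` and all breakpoints of `f` are dyadic: there is a
witnessing partition with dyadic partition points on whose intervals `f` is affine with
slope a power of `2`. -/
def IsPL2 (f : ℝ → ℝ) : Prop :=
  ∃ (n : ℕ) (a : Fin (n + 1) → ℝ), StrictMono a ∧ a 0 = 0 ∧ a (Fin.last n) = 1 ∧
    (∀ i, IsDyadic (a i)) ∧
    ∀ i : Fin n, ∃ (m : ℤ) (c : ℝ), ∀ x ∈ Icc (a i.castSucc) (a i.succ),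
      f x = (2 : ℝ) ^ m * x + c

section DyadicAux

lemma dyadN_mono' {x : ℝ} {N N' : ℕ} (h : N ≤ N') (hx : ∃ k : ℤ, x = (k:ℝ) / 2^N) :
    ∃ k : ℤ, x = (k:ℝ) / 2^N' := by
  obtain ⟨k, rfl⟩ := hx
  refine ⟨k * 2^(N'-N), ?_⟩
  have h2 : (2:ℝ)^N' = 2^N * 2^(N'-N) := by rw [← pow_add]; congr 1; omega
  push_cast
  rw [h2, div_eq_div_iff (by positivity) (by positivity)]
  ring

lemma IsDyadic.add' {x y : ℝ} (hx : IsDyadic x) (hy : IsDyadic y) : IsDyadic (x + y) := by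
  obtain ⟨k, n, rfl⟩ := hx
  obtain ⟨l, m, rfl⟩ := hy
  refine ⟨k * 2^m + l * 2^n, n + m, ?_⟩
  push_cast
  rw [div_add_div _ _ (by positivity) (by positivity), pow_add]
  ring_nf

lemma IsDyadic.neg' {x : ℝ} (hx : IsDyadic x) : IsDyadic (-x) := by
  obtain ⟨k, n, rfl⟩ := hx
  exact ⟨-k, n, by push_cast; ring⟩

lemma IsDyadic.sub' {x y : ℝ} (hx : IsDyadic x) (hy : IsDyadic y) : IsDyadic (x - y) := by
  simpa [sub_eq_add_neg] using hx.add' hy.neg'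

lemma zpow_two_eq (m : ℤ) : (2:ℝ)^m = 2^(m.toNat) / 2^((-m).toNat) := by
  rcases le_or_gt 0 m with h | h
  · rw [(by omega : (-m).toNat = 0), pow_zero, div_one, ← zpow_natCast (2:ℝ) m.toNat,
      Int.toNat_of_nonneg h]
  · rw [(by omega : m.toNat = 0), pow_zero, ← zpow_natCast (2:ℝ) ((-m).toNat),
      Int.toNat_of_nonneg (by omega), eq_div_iff (by positivity),
      ← zpow_add₀ (two_ne_zero)]
    simp

lemma IsDyadic.zpow2_mul {x : ℝ} (m : ℤ) (hx : IsDyadic x) : IsDyadic ((2:ℝ)^m * x) := by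
  obtain ⟨k, n, rfl⟩ := hx
  refine ⟨k * 2^(m.toNat), (-m).toNat + n, ?_⟩
  rw [zpow_two_eq]
  push_cast
  rw [pow_add]
  field_simp

lemma strictMonoOn_glue {n : ℕ} : ∀ {a : Fin (n+1) → ℝ} {f : ℝ → ℝ},
    StrictMono a →
    (∀ i : Fin n, StrictMonoOn f (Icc (a i.castSucc) (a i.succ))) →
    StrictMonoOn f (Icc (a 0) (a (Fin.last n))) := by
  induction n with
  | zero =>
    intro a f ha h x hx y hy hxy
    simp [Fin.last] at hx hy
    exact absurd (hx.trans hy.symm) hxy.ne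
  | succ n ih =>
    intro a f ha h
    have h1 : StrictMonoOn f (Icc ((a ∘ Fin.castSucc) 0) ((a ∘ Fin.castSucc) (Fin.last n))) := by
      apply ih (ha.comp (fun _ _ h => h))
      intro i
      have := h i.castSucc
      rw [Fin.succ_castSucc] at this; exact this
    have h2 : StrictMonoOn f (Icc (a (Fin.last n).castSucc) (a (Fin.last n).succ)) :=
      h (Fin.last n)
    have e1 : (a ∘ Fin.castSucc) (Fin.last n) = a (Fin.last n).castSucc := rfl
    have e0 : (a ∘ Fin.castSucc) 0 = a 0 := by simp [Fin.castSucc_zero]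
    have e2 : (Fin.last n).succ = Fin.last (n+1) := by ext; simp [Fin.last]
    rw [e0, e1] at h1
    rw [e2] at h2
    have hle1 : a 0 ≤ a (Fin.last n).castSucc := ha.monotone (Fin.zero_le _)
    have hle2 : a (Fin.last n).castSucc ≤ a (Fin.last (n+1)) := ha.monotone (by
      rw [← e2]; exact (Fin.castSucc_lt_succ).le)
    have := StrictMonoOn.union h1 h2 (isGreatest_Icc hle1) (isLeast_Icc hle2)
    rwa [Icc_union_Icc_eq_Icc hle1 hle2] at this

lemma exists_piece {n : ℕ} : ∀ {a : Fin (n+1) → ℝ}, StrictMono a → ∀ {x : ℝ},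
    a 0 ≤ x → x < a (Fin.last n) →
    ∃ i : Fin n, a i.castSucc ≤ x ∧ x < a i.succ := by
  induction n with
  | zero => intro a ha x h0 h1; exact absurd (h0.trans_lt h1) (by simp [Fin.last])
  | succ n ih =>
    intro a ha x h0 h1
    rcases le_or_gt (a (Fin.last n).castSucc) x with hge | hlt
    · refine ⟨Fin.last n, hge, ?_⟩
      have e2 : (Fin.last n).succ = Fin.last (n+1) := by ext; simp [Fin.last]
      rwa [e2]
    · have h0' : (a ∘ Fin.castSucc) 0 ≤ x := by simpa [Fin.castSucc_zero] using h0
      obtain ⟨i, hi1, hi2⟩ := ih (ha.comp (fun _ _ h => h)) h0' hlt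
      exact ⟨i.castSucc, hi1, by rw [Fin.succ_castSucc]; exact hi2⟩

end DyadicAux

/-- A piecewise-linear orientation-preserving homeomorphism of `[0,1]` is a dyadic
rearrangement if and only if all its slopes are powers of `2` and all its breakpoints
have dyadic rational coordinates. -/
theorem isDyadicRearrangement_iff (f : ℝ → ℝ) (hf : IsPLHomeo f)
    (hf0 : f 0 = 0) (hf1 : f 1 = 1) :
    IsDyadicRearrangement f ↔ IsPL2 f := by
  constructor
  · -- Dyadic rearrangement → PL2
    rintro ⟨n, a, b, ⟨hamono, ha0, ha1, hastd⟩, ⟨hbmono, hb0, hb1, hbstd⟩, hpiece⟩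
    refine ⟨n, a, hamono, ha0, ha1, ?_, ?_⟩
    · intro i
      by_cases hi : (i:ℕ) < n
      · obtain ⟨k, m, hk, _⟩ := hastd ⟨i, hi⟩
        have hcs : (⟨(i:ℕ), hi⟩ : Fin n).castSucc = i := by ext; rfl
        exact ⟨(k:ℤ), m, by rw [← hcs, hk]; push_cast; ring⟩
      · have hlast : i = Fin.last n := by ext; simp [Fin.last]; omega
        exact ⟨1, 0, by rw [hlast, ha1]; norm_num⟩
    · intro i
      obtain ⟨s, c, hfx, hfcast, hfsucc⟩ := hpiece i
      obtain ⟨ka, ma, hka, hka'⟩ := hastd i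
      obtain ⟨kb, mb, hkb, hkb'⟩ := hbstd i
      have hlt : a i.castSucc < a i.succ := hamono (Fin.castSucc_lt_succ (i := i))
      have e1 : s * a i.castSucc + c = b i.castSucc := by
        rw [← hfx _ ⟨le_rfl, hlt.le⟩, hfcast]
      have e2 : s * a i.succ + c = b i.succ := by
        rw [← hfx _ ⟨hlt.le, le_rfl⟩, hfsucc]
      have hd : s * (a i.succ - a i.castSucc) = b i.succ - b i.castSucc := by
        ring_nf; linarith
      have hda : a i.succ - a i.castSucc = 1 / 2^ma := by rw [hka, hka']; ring
      have hdb : b i.succ - b i.castSucc = 1 / 2^mb := by rw [hkb, hkb']; ring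
      have hs : s = (2:ℝ) ^ ((ma:ℤ) - (mb:ℤ)) := by
        rw [zpow_sub₀ (two_ne_zero), zpow_natCast, zpow_natCast,
          eq_div_iff (by positivity)]
        rw [hda, hdb] at hd
        field_simp at hd
        linarith
      exact ⟨(ma:ℤ) - (mb:ℤ), c, fun x hx => by rw [hfx x hx, hs]⟩
  · -- PL2 → dyadic rearrangement
    rintro ⟨n, a, hmono, ha0, ha1, hdy, hpiece⟩
    choose m c hfc using hpiece
    -- monotonicity of f on [0,1]
    have hfm : StrictMonoOn f (Icc 0 1) := by
      have hg : ∀ i : Fin n, StrictMonoOn f (Icc (a i.castSucc) (a i.succ)) := by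
        intro i x hx y hy hxy
        rw [hfc i x hx, hfc i y hy]
        have h2 : (0:ℝ) < 2 ^ (m i) := zpow_pos (by norm_num) _
        nlinarith
      have := strictMonoOn_glue hmono hg
      rwa [ha0, ha1] at this
    -- f(a i) and c i are dyadic
    have hfa : ∀ i, IsDyadic (f (a i)) := by
      intro i
      induction i using Fin.induction with
      | zero => rw [ha0, hf0]; exact ⟨0, 0, by norm_num⟩
      | succ i ih =>
        have hle : a i.castSucc ≤ a i.succ := (hmono (Fin.castSucc_lt_succ (i := i))).le
        have h1 := hfc i (a i.castSucc) ⟨le_rfl, hle⟩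
        have h2 := hfc i (a i.succ) ⟨hle, le_rfl⟩
        have he : f (a i.succ)
            = 2^(m i) * a i.succ + (f (a i.castSucc) - 2^(m i) * a i.castSucc) := by
          rw [h1, h2]; ring
        rw [he]
        exact (((hdy _).zpow2_mul _).add' (ih.sub' ((hdy _).zpow2_mul _)))
    have hcdy : ∀ i : Fin n, IsDyadic (c i) := by
      intro i
      have hle : a i.castSucc ≤ a i.succ := (hmono (Fin.castSucc_lt_succ (i := i))).le
      have h1 := hfc i (a i.castSucc) ⟨le_rfl, hle⟩
      have he : c i = f (a i.castSucc) - 2^(m i) * a i.castSucc := by rw [h1]; ring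
      rw [he]
      exact (hfa _).sub' ((hdy _).zpow2_mul _)
    choose P Q hPQ using hcdy
    choose A E hAE using hdy
    -- pick a common fine level N
    set N : ℕ := (Finset.univ.sup fun i : Fin n => (m i + (Q i : ℤ)).toNat)
        ⊔ (Finset.univ.sup E) with hNdef
    have hN1 : ∀ i : Fin n, m i + (Q i : ℤ) ≤ (N:ℤ) := by
      intro i
      have h1 : (m i + (Q i : ℤ)).toNat ≤ N := by
        rw [hNdef]
        exact le_trans
          (Finset.le_sup (f := fun i : Fin n => (m i + (Q i : ℤ)).toNat)
            (Finset.mem_univ i)) le_sup_left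
      omega
    have hN2 : ∀ i : Fin (n+1), ∃ k : ℤ, a i = (k:ℝ) / 2^N := by
      intro i
      refine dyadN_mono' ?_ ⟨A i, hAE i⟩
      rw [hNdef]
      exact le_trans (Finset.le_sup (f := E) (Finset.mem_univ i)) le_sup_right
    have hpos : (0:ℝ) < 2^N := by positivity
    have hmem : ∀ j : ℕ, j ≤ 2^N → ((j:ℝ)/2^N) ∈ Icc (0:ℝ) 1 := by
      intro j hj
      refine ⟨by positivity, ?_⟩
      rw [div_le_one hpos]
      exact_mod_cast hj
    -- find the containing piece for each subinterval
    have key : ∀ j : Fin (2^N), ∃ i : Fin n,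
        a i.castSucc ≤ ((j:ℕ):ℝ)/2^N ∧ (((j:ℕ):ℝ)+1)/2^N ≤ a i.succ := by
      intro j
      have hj : (j:ℕ) < 2^N := j.isLt
      have h0 : a 0 ≤ ((j:ℕ):ℝ)/2^N := by rw [ha0]; positivity
      have h1 : ((j:ℕ):ℝ)/2^N < a (Fin.last n) := by
        rw [ha1, div_lt_one hpos]; exact_mod_cast hj
      obtain ⟨i, hi1, hi2⟩ := exists_piece hmono h0 h1
      refine ⟨i, hi1, ?_⟩
      obtain ⟨k, hk⟩ := hN2 i.succ
      rw [hk] at hi2 ⊢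
      rw [div_lt_div_iff₀ hpos hpos] at hi2
      rw [div_le_div_iff₀ hpos hpos]
      have hjk : ((j:ℕ):ℤ) < k := by exact_mod_cast (mul_lt_mul_iff_of_pos_right hpos).mp hi2
      have hjk' : (((j:ℕ):ℝ)+1) ≤ (k:ℝ) := by exact_mod_cast hjk
      nlinarith
    choose i0 hi1 hi2 using key
    -- the image computation
    have himg : ∀ (i : Fin n) (t : ℝ),
        (2:ℝ)^(m i) * (t/2^N) + c i
          = (t + (P i : ℝ) * 2^(((N:ℤ) - m i).toNat - Q i)) / 2^(((N:ℤ) - m i).toNat) := by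
      intro i t
      set M : ℕ := ((N:ℤ) - m i).toNat with hMdef
      have hMQ : Q i ≤ M := by have := hN1 i; omega
      have hM : (M:ℤ) = (N:ℤ) - m i := by have := hN1 i; omega
      have hpow : (2:ℝ)^(m i) * (2:ℝ)^M = 2^N := by
        rw [← zpow_natCast (2:ℝ) M, ← zpow_natCast (2:ℝ) N, ← zpow_add₀ (two_ne_zero)]
        congr 1
        omega
      have hMpos : (0:ℝ) < 2^M := by positivity
      have h1 : (2:ℝ)^(m i) * (t/2^N) = t / 2^M := by
        rw [eq_div_iff (ne_of_gt hMpos)]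
        field_simp
        linear_combination t * hpow
      have h2 : c i = (P i : ℝ) * 2^(M - Q i) / 2^M := by
        rw [hPQ i, div_eq_div_iff (by positivity) (by positivity),
          (by rw [← pow_add]; congr 1; omega : (2:ℝ)^M = 2^(Q i) * 2^(M - Q i))]
        ring
      rw [h1, h2, ← add_div]
    -- nonnegativity of values
    have hnn : ∀ j : ℕ, j ≤ 2^N → (0:ℝ) ≤ f ((j:ℝ)/2^N) := by
      intro j hj
      have h0 : (0:ℝ) ∈ Icc (0:ℝ) 1 := by norm_num
      have := hfm.monotoneOn h0 (hmem j hj) (by positivity)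
      rwa [hf0] at this
    refine ⟨2^N, (fun j : Fin (2^N+1) => ((j:ℕ):ℝ)/2^N),
      (fun j => f (((j:ℕ):ℝ)/2^N)), ⟨?_, ?_, ?_, ?_⟩, ⟨?_, ?_, ?_, ?_⟩, ?_⟩
    · -- a' strict mono
      intro x y hxy
      show ((x:ℕ):ℝ)/2^N < ((y:ℕ):ℝ)/2^N
      rw [div_lt_div_iff₀ hpos hpos]
      have : ((x:ℕ):ℝ) < ((y:ℕ):ℝ) := by exact_mod_cast hxy
      nlinarith
    · simp
    · show ((Fin.last (2^N) : ℕ):ℝ)/2^N = 1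
      rw [Fin.val_last]; field_simp; norm_num
    · intro j
      refine ⟨(j:ℕ), N, ?_, ?_⟩
      · show ((j.castSucc : ℕ):ℝ)/2^N = _
        rw [Fin.coe_castSucc]
      · show ((j.succ : ℕ):ℝ)/2^N = _
        rw [Fin.val_succ]; push_cast; ring
    · -- b' strict mono
      intro x y hxy
      have hx := hmem (x:ℕ) (by omega)
      have hy := hmem (y:ℕ) (by omega)
      apply hfm hx hy
      show ((x:ℕ):ℝ)/2^N < ((y:ℕ):ℝ)/2^N
      rw [div_lt_div_iff₀ hpos hpos]
      have : ((x:ℕ):ℝ) < ((y:ℕ):ℝ) := by exact_mod_cast hxy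
      nlinarith
    · simpa using hf0
    · show f (((Fin.last (2^N) : ℕ):ℝ)/2^N) = 1
      rw [Fin.val_last, (by push_cast; field_simp : (((2^N : ℕ)):ℝ)/2^N = 1)]
      exact hf1
    · -- b' intervals are standard dyadic
      intro j
      show IsStdDyadicInterval (f (((j.castSucc : ℕ):ℝ)/2^N)) (f (((j.succ : ℕ):ℝ)/2^N))
      have hj : (j:ℕ) < 2^N := j.isLt
      set i := i0 j with hidef
      set M : ℕ := ((N:ℤ) - m i).toNat with hMdef
      have hle : ((j:ℕ):ℝ)/2^N ≤ (((j:ℕ):ℝ)+1)/2^N := by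
        rw [div_le_div_iff₀ hpos hpos]; nlinarith
      have hm1 : ((j:ℕ):ℝ)/2^N ∈ Icc (a i.castSucc) (a i.succ) :=
        ⟨hi1 j, le_trans hle (hi2 j)⟩
      have hm2 : (((j:ℕ):ℝ)+1)/2^N ∈ Icc (a i.castSucc) (a i.succ) :=
        ⟨le_trans (hi1 j) hle, hi2 j⟩
      have hv1 : f (((j.castSucc : ℕ):ℝ)/2^N)
          = (((j:ℕ):ℝ) + (P i : ℝ) * 2^(M - Q i)) / 2^M := by
        rw [Fin.coe_castSucc, hfc i _ hm1, himg i]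
      have hv2 : f (((j.succ : ℕ):ℝ)/2^N)
          = ((((j:ℕ):ℝ)+1) + (P i : ℝ) * 2^(M - Q i)) / 2^M := by
        rw [Fin.val_succ, (by push_cast; ring : (((j:ℕ)+1 : ℕ):ℝ) = ((j:ℕ):ℝ)+1),
          hfc i _ hm2, himg i]
      set K : ℤ := ((j:ℕ):ℤ) + P i * 2^(M - Q i) with hKdef
      have hKcast : (K:ℝ) = ((j:ℕ):ℝ) + (P i : ℝ) * 2^(M - Q i) := by
        rw [hKdef]; push_cast; ring
      have hMpos : (0:ℝ) < 2^M := by positivity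
      have hKnn : 0 ≤ K := by
        have h0 := hnn (j:ℕ) hj.le
        rw [(by rw [Fin.coe_castSucc] : f (((j:ℕ):ℝ)/2^N) = f (((j.castSucc : ℕ):ℝ)/2^N)),
          hv1, ← hKcast] at h0
        have := (le_div_iff₀ hMpos).mp h0
        simp only [zero_mul] at this
        exact_mod_cast this
      have hKnat : ((K.toNat : ℕ) : ℝ) = (K:ℝ) := by
        rw [← Int.cast_natCast, Int.toNat_of_nonneg hKnn]
      refine ⟨K.toNat, M, ?_, ?_⟩
      · rw [hv1, hKnat, hKcast]
      · rw [hv2, hKnat, hKcast]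
        ring_nf
    · -- the affine pieces
      intro j
      refine ⟨2^(m (i0 j)), c (i0 j), ?_, rfl, rfl⟩
      intro x hx
      apply hfc (i0 j) x
      refine ⟨le_trans (hi1 j) ?_, le_trans ?_ (hi2 j)⟩
      · have h1 := hx.1
        simp only [Fin.coe_castSucc] at h1
        exact h1
      · have h2 := hx.2
        simp only [Fin.val_succ] at h2
        push_cast at h2
        exact h2
end

section
/- In Thompson's group F, the submonoid generated by x_0^{-1} and x_1 is a free monoid on two generators. -/
/-- The defining relations of Thompson's group `F`:
`x_n x_k = x_k x_{n+1}` for `k < n`. -/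
def thompsonRels : Set (FreeGroup ℕ) :=
  {r | ∃ n k : ℕ, k < n ∧
    r = FreeGroup.of n * FreeGroup.of k * (FreeGroup.of k * FreeGroup.of (n + 1))⁻¹}

/-- Thompson's group `F`, via its standard infinite presentation. -/
abbrev ThompsonF := PresentedGroup thompsonRels

/-- The generator `x_n` of Thompson's group `F`. -/
noncomputable def x (n : ℕ) : ThompsonF := PresentedGroup.of n

/-! ### A faithful-enough PL realization of `F` on the real line. -/

/-- The standard PL map (forward direction). -/
noncomputable def fT (m : ℕ) (t : ℝ) : ℝ :=
  if t ≤ (m : ℝ) then t else if t ≤ (m : ℝ) + 1 then 2 * t - m else t + 1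

/-- The inverse of `fT m`. -/
noncomputable def gT (m : ℕ) (t : ℝ) : ℝ :=
  if t ≤ (m : ℝ) then t else if t ≤ (m : ℝ) + 2 then (t + m) / 2 else t - 1

/-- `x_n` acts as the permutation with forward map `gT n` (i.e. `(fT n)⁻¹`). -/
noncomputable def phiT (m : ℕ) : Equiv.Perm ℝ where
  toFun := gT m
  invFun := fT m
  left_inv := by
    intro t
    simp only [fT, gT]
    split_ifs <;> linarith
  right_inv := by
    intro t
    simp only [fT, gT]
    split_ifs <;> linarith

set_option maxHeartbeats 1600000 in
lemma gT_comm {k n : ℕ} (hkn : k < n) (t : ℝ) :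
    gT n (gT k t) = gT k (gT (n + 1) t) := by
  have hk' : k + 1 ≤ n := hkn
  have hk : (k : ℝ) + 1 ≤ (n : ℝ) := by exact_mod_cast hk'
  simp only [gT, Nat.cast_add, Nat.cast_one]
  split_ifs <;> linarith

lemma phiT_comm {k n : ℕ} (hkn : k < n) :
    phiT n * phiT k = phiT k * phiT (n + 1) := by
  ext t
  simp only [Equiv.Perm.mul_apply]
  exact gT_comm hkn t

lemma rels_hold : ∀ r ∈ thompsonRels, (FreeGroup.lift phiT) r = 1 := by
  rintro r ⟨n, k, hkn, rfl⟩
  simp only [map_mul, map_inv, FreeGroup.lift_apply_of]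
  rw [mul_inv_eq_one]
  exact phiT_comm hkn

/-- The representation of `F` on `ℝ`. -/
noncomputable def Phi : ThompsonF →* Equiv.Perm ℝ := PresentedGroup.toGroup rels_hold

lemma Phi_x (n : ℕ) : Phi (x n) = phiT n := PresentedGroup.toGroup.of rels_hold

/-! ### The two monoid generators as concrete functions. -/

lemma a_small {t : ℝ} (h0 : 0 < t) (h1 : t ≤ 1) : fT 0 t = 2 * t := by
  simp only [fT, Nat.cast_zero]
  split_ifs <;> linarith

lemma a_big {t : ℝ} (h : 1 ≤ t) : fT 0 t = t + 1 := by
  simp only [fT, Nat.cast_zero]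
  split_ifs <;> linarith

lemma b_small {t : ℝ} (h : t ≤ 1) : gT 1 t = t := by
  simp only [gT, Nat.cast_one]
  split_ifs <;> linarith

lemma b_mid {t : ℝ} (h1 : 1 ≤ t) (h3 : t ≤ 3) : gT 1 t = (t + 1) / 2 := by
  simp only [gT, Nat.cast_one]
  split_ifs <;> linarith

lemma b_big {t : ℝ} (h : 3 ≤ t) : gT 1 t = t - 1 := by
  simp only [gT, Nat.cast_one]
  split_ifs <;> linarith

lemma a_mono : StrictMono (fT 0) := by
  intro s t hst
  simp only [fT, Nat.cast_zero]
  split_ifs <;> linarith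

lemma b_mono : StrictMono (gT 1) := by
  intro s t hst
  simp only [gT, Nat.cast_one]
  split_ifs <;> linarith

/-- Evaluation of a word in `a = x₀⁻¹` (true) and `b = x₁` (false). -/
noncomputable def W : List Bool → ℝ → ℝ
  | [], t => t
  | true :: l, t => fT 0 (W l t)
  | false :: l, t => gT 1 (W l t)

lemma W_inj (l : List Bool) : Function.Injective (W l) := by
  induction l with
  | nil => exact fun s t h => h
  | cons c l ih =>
    cases c
    · exact fun s t h => ih (b_mono.injective h)
    · exact fun s t h => ih (a_mono.injective h)

lemma count_add_count (l : List Bool) : l.count true + l.count false = l.length := by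
  induction l with
  | nil => simp
  | cons c l ih => cases c <;> simp [List.count_cons] <;> omega

lemma small_bound {A n : ℕ} (hA : A ≤ n) {s : ℝ} (hs0 : 0 ≤ s)
    (hs : s ≤ ((1 : ℝ) / 8) ^ (n + 2)) : (2 : ℝ) ^ A * s ≤ 1 / 64 := by
  have h1 : (2 : ℝ) ^ A ≤ 2 ^ n := pow_le_pow_right₀ one_le_two hA
  have h2 : (2 : ℝ) ^ n * ((1 / 8) ^ (n + 2)) ≤ 1 / 64 := by
    have he : (2 : ℝ) ^ n * ((1 / 8) ^ (n + 2)) = (1 / 4) ^ n * (1 / 64) := by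
      rw [pow_add, ← mul_assoc, ← mul_pow]
      norm_num
    rw [he]
    have : ((1 : ℝ) / 4) ^ n ≤ 1 := pow_le_one₀ (by norm_num) (by norm_num)
    nlinarith
  calc (2 : ℝ) ^ A * s ≤ 2 ^ n * ((1 / 8) ^ (n + 2)) :=
        mul_le_mul h1 hs hs0 (by positivity)
    _ ≤ 1 / 64 := h2

lemma small_bound4 {A n : ℕ} (hA : A ≤ n) {s : ℝ} (hs0 : 0 ≤ s)
    (hs : s ≤ ((1 : ℝ) / 4) ^ (n + 1)) : (2 : ℝ) ^ A * s ≤ 1 / 4 := by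
  have h1 : (2 : ℝ) ^ A ≤ 2 ^ n := pow_le_pow_right₀ one_le_two hA
  have h2 : (2 : ℝ) ^ n * ((1 / 4) ^ (n + 1)) ≤ 1 / 4 := by
    have he : (2 : ℝ) ^ n * ((1 / 4) ^ (n + 1)) = (1 / 2) ^ n * (1 / 4) := by
      rw [pow_add, ← mul_assoc, ← mul_pow]
      norm_num
    rw [he]
    have : ((1 : ℝ) / 2) ^ n ≤ 1 := pow_le_one₀ (by norm_num) (by norm_num)
    nlinarith
  calc (2 : ℝ) ^ A * s ≤ 2 ^ n * ((1 / 4) ^ (n + 1)) :=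
        mul_le_mul h1 hs hs0 (by positivity)
    _ ≤ 1 / 4 := h2

/-- Germ at `0⁺`: tiny positive reals are scaled by `2 ^ (number of a's)`. -/
lemma germ_zero (l : List Bool) : ∀ t : ℝ, 0 < t → t ≤ (1 / 4 : ℝ) ^ l.length →
    W l t = 2 ^ (l.count true) * t := by
  induction l with
  | nil => intro t _ _; simp [W]
  | cons c l ih =>
    intro t ht hle
    have hlen : ((1 : ℝ) / 4) ^ (c :: l).length ≤ (1 / 4) ^ l.length := by
      apply pow_le_pow_of_le_one (by norm_num) (by norm_num)
      simp
    have hW := ih t ht (le_trans hle hlen)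
    have hle' : t ≤ ((1 : ℝ) / 4) ^ (l.length + 1) := by
      simpa using hle
    have hub : (2 : ℝ) ^ (l.count true) * t ≤ 1 / 4 :=
      small_bound4 (List.count_le_length) ht.le hle'
    have hpos : 0 < (2 : ℝ) ^ (l.count true) * t := by positivity
    cases c
    · show gT 1 (W l t) = _
      rw [hW, b_small (by linarith)]
      simp [List.count_cons]
    · show fT 0 (W l t) = _
      rw [hW, a_small hpos (by linarith)]
      simp [List.count_cons, pow_succ]
      ring

/-- Germ at `+∞`: large reals are translated by `#a - #b`. -/
lemma germ_infty (l : List Bool) : ∀ t : ℝ, (l.length : ℝ) + 3 ≤ t →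
    W l t = t + (l.count true : ℝ) - (l.count false : ℝ) := by
  induction l with
  | nil => intro t _; simp [W]
  | cons c l ih =>
    intro t ht
    have hlen : ((c :: l).length : ℝ) = (l.length : ℝ) + 1 := by push_cast [List.length_cons]; ring
    have ht' : (l.length : ℝ) + 3 ≤ t := by rw [hlen] at ht; linarith
    have hW := ih t ht'
    have hB : (l.count false : ℝ) ≤ (l.length : ℝ) := by
      exact_mod_cast List.count_le_length
    have hA0 : (0 : ℝ) ≤ (l.count true : ℝ) := by positivity
    have hv : (l.length : ℝ) + 4 ≤ t := by rw [hlen] at ht; linarith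
    have hvb : (4 : ℝ) ≤ W l t := by rw [hW]; linarith
    cases c
    · show gT 1 (W l t) = _
      rw [b_big (by linarith), hW]
      simp [List.count_cons]
      ring
    · show fT 0 (W l t) = _
      rw [a_big (by linarith), hW]
      simp [List.count_cons]
      ring

/-- Germ just above the preimage of a small value `y ≤ 1/2`. -/
lemma germ_mid (l : List Bool) : ∀ y : ℝ, 0 < y → y ≤ 1 / 2 →
    ∃ ρ : ℝ, W l ρ = y ∧ ∀ s : ℝ, 0 < s → s ≤ ((1 : ℝ) / 8) ^ (l.length + 1) →
      W l (ρ + s) = y + 2 ^ (l.count true) * s := by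
  induction l with
  | nil =>
    intro y hy _
    exact ⟨y, by simp [W], fun s _ _ => by simp [W]⟩
  | cons c l ih =>
    intro y hy hy2
    have hrad : ((1 : ℝ) / 8) ^ ((c :: l).length + 1) ≤ (1 / 8) ^ (l.length + 1) := by
      apply pow_le_pow_of_le_one (by norm_num) (by norm_num)
      simp
    have hb : ∀ s : ℝ, 0 < s → s ≤ ((1 : ℝ) / 8) ^ ((c :: l).length + 1) →
        (2 : ℝ) ^ (l.count true) * s ≤ 1 / 64 := by
      intro s hs0 hs
      apply small_bound (List.count_le_length) hs0.le
      have : ((c : Bool) :: l).length + 1 = l.length + 2 := by simp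
      rw [this] at hs
      exact hs
    cases c
    · -- b : gT 1
      obtain ⟨ρ, h1, h2⟩ := ih y hy hy2
      refine ⟨ρ, ?_, ?_⟩
      · show gT 1 (W l ρ) = y
        rw [h1, b_small (by linarith)]
      · intro s hs0 hs
        show gT 1 (W l (ρ + s)) = _
        rw [h2 s hs0 (le_trans hs hrad)]
        have hbb := hb s hs0 hs
        have hsp : 0 < (2:ℝ) ^ (l.count true) * s := by positivity
        rw [b_small (by linarith)]
        simp [List.count_cons]
    · -- a : fT 0
      obtain ⟨ρ, h1, h2⟩ := ih (y / 2) (by linarith) (by linarith)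
      refine ⟨ρ, ?_, ?_⟩
      · show fT 0 (W l ρ) = y
        rw [h1, a_small (by linarith) (by linarith)]
        ring
      · intro s hs0 hs
        show fT 0 (W l (ρ + s)) = _
        rw [h2 s hs0 (le_trans hs hrad)]
        have hbb := hb s hs0 hs
        have hsp : 0 < (2:ℝ) ^ (l.count true) * s := by positivity
        rw [a_small (by linarith) (by linarith)]
        simp [List.count_cons, pow_succ]
        ring

/-- Number of leading `b`'s (leading `false`s). -/
def ld : List Bool → ℕ
  | [] => 0
  | true :: _ => 0
  | false :: l => ld l + 1

/-- Germ just above the preimage of `1`: the slope there detects the number of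
leading `b`'s. -/
lemma germ_one (l : List Bool) :
    ∃ τ : ℝ, W l τ = 1 ∧ ∀ s : ℝ, 0 < s → s ≤ ((1 : ℝ) / 8) ^ (l.length + 1) →
      W l (τ + s) = 1 + 2 ^ (l.count true) * (1 / 2) ^ (ld l) * s := by
  induction l with
  | nil => exact ⟨1, by simp [W], fun s _ _ => by simp [W, ld]⟩
  | cons c l ih =>
    have hrad : ((1 : ℝ) / 8) ^ ((c :: l).length + 1) ≤ (1 / 8) ^ (l.length + 1) := by
      apply pow_le_pow_of_le_one (by norm_num) (by norm_num)
      simp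
    have hb : ∀ s : ℝ, 0 < s → s ≤ ((1 : ℝ) / 8) ^ ((c :: l).length + 1) →
        (2 : ℝ) ^ (l.count true) * s ≤ 1 / 64 := by
      intro s hs0 hs
      apply small_bound (List.count_le_length) hs0.le
      have : ((c : Bool) :: l).length + 1 = l.length + 2 := by simp
      rw [this] at hs
      exact hs
    cases c
    · -- leading b
      obtain ⟨τ, h1, h2⟩ := ih
      refine ⟨τ, ?_, ?_⟩
      · show gT 1 (W l τ) = 1
        rw [h1, b_small le_rfl]
      · intro s hs0 hs
        show gT 1 (W l (τ + s)) = _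
        rw [h2 s hs0 (le_trans hs hrad)]
        have hld : ((1:ℝ)/2) ^ (ld l) ≤ 1 := pow_le_one₀ (by norm_num) (by norm_num)
        have hldpos : (0:ℝ) < (1/2) ^ (ld l) := by positivity
        have hbb := hb s hs0 hs
        have hsp : 0 < (2:ℝ) ^ (l.count true) * s := by positivity
        have hprod : 0 < (2:ℝ) ^ (l.count true) * (1/2) ^ (ld l) * s := by positivity
        have hprod2 : (2:ℝ) ^ (l.count true) * (1/2) ^ (ld l) * s ≤ 1/64 := by
          calc (2:ℝ) ^ (l.count true) * (1/2) ^ (ld l) * s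
              ≤ (2:ℝ) ^ (l.count true) * 1 * s := by
                apply mul_le_mul_of_nonneg_right _ hs0.le
                apply mul_le_mul_of_nonneg_left hld (by positivity)
            _ = (2:ℝ) ^ (l.count true) * s := by ring
            _ ≤ 1/64 := hbb
        rw [b_mid (by linarith) (by linarith)]
        have : ld (false :: l) = ld l + 1 := rfl
        rw [this]
        simp only [List.count_cons]
        norm_num
        ring
    · -- leading a
      obtain ⟨ρ, h1, h2⟩ := germ_mid l (1 / 2) (by norm_num) le_rfl
      refine ⟨ρ, ?_, ?_⟩
      · show fT 0 (W l ρ) = 1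
        rw [h1, a_small (by norm_num) (by norm_num)]
        norm_num
      · intro s hs0 hs
        show fT 0 (W l (ρ + s)) = _
        rw [h2 s hs0 (le_trans hs hrad)]
        have hbb := hb s hs0 hs
        have hsp : 0 < (2:ℝ) ^ (l.count true) * s := by positivity
        rw [a_small (by linarith) (by linarith)]
        have : ld (true :: l) = 0 := rfl
        rw [this]
        simp only [List.count_cons, pow_zero]
        norm_num
        ring

lemma two_pow_inj {m n : ℕ} (h : (2 : ℝ) ^ m = 2 ^ n) : m = n := by
  rcases lt_trichotomy m n with hlt | heq | hgt
  · have := pow_lt_pow_right₀ (one_lt_two (α := ℝ)) hlt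
    linarith
  · exact heq
  · have := pow_lt_pow_right₀ (one_lt_two (α := ℝ)) hgt
    linarith

/-- If a word acts as the identity, it is empty. -/
lemma id_case (l : List Bool) (h : ∀ t : ℝ, W l t = t) : l = [] := by
  have h2 := germ_infty l ((l.length : ℝ) + 3) le_rfl
  rw [h] at h2
  have hAB : (l.count true : ℝ) = (l.count false : ℝ) := by linarith
  have hAB' : l.count true = l.count false := by exact_mod_cast hAB
  have h1 := germ_zero l ((1 / 4 : ℝ) ^ l.length) (by positivity) le_rfl
  rw [h] at h1
  have hpow : (2 : ℝ) ^ (l.count true) = 2 ^ (0 : ℕ) := by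
    have hne : ((1 / 4 : ℝ) ^ l.length) ≠ 0 := by positivity
    have h2A : (2:ℝ) ^ (l.count true) * ((1 / 4 : ℝ) ^ l.length)
        = 1 * ((1 / 4 : ℝ) ^ l.length) := by rw [one_mul]; exact h1.symm
    rw [pow_zero]
    exact mul_right_cancel₀ hne h2A
  have hA0 : l.count true = 0 := two_pow_inj hpow
  have : l.length = 0 := by
    have := count_add_count l
    omega
  exact List.eq_nil_of_length_eq_zero this

lemma main_aux : ∀ l₁ l₂ : List Bool, (∀ t : ℝ, W l₁ t = W l₂ t) → l₁ = l₂ := by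
  intro l₁
  induction l₁ with
  | nil =>
    intro l₂ h
    exact (id_case l₂ (fun t => ((h t).symm.trans (by simp [W])))).symm
  | cons c l ih =>
    intro l₂ h
    -- counts of a's agree
    have hA : (c :: l).count true = l₂.count true := by
      set t : ℝ := min ((1 / 4 : ℝ) ^ (c :: l).length) ((1 / 4 : ℝ) ^ l₂.length) with ht
      have htpos : 0 < t := lt_min (by positivity) (by positivity)
      have e1 := germ_zero (c :: l) t htpos (min_le_left _ _)
      have e2 := germ_zero l₂ t htpos (min_le_right _ _)
      have : (2 : ℝ) ^ ((c :: l).count true) * t = 2 ^ (l₂.count true) * t := by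
        rw [← e1, ← e2, h]
      exact two_pow_inj (mul_right_cancel₀ (ne_of_gt htpos) this)
    -- l₂ is nonempty
    have hne : l₂ ≠ [] := by
      intro hnil
      subst hnil
      have : c :: l = [] := id_case _ (fun t => (h t).trans (by simp [W]))
      exact (List.cons_ne_nil c l) this
    obtain ⟨c', l₂', rfl⟩ : ∃ c' l₂', l₂ = c' :: l₂' := by
      cases l₂ with
      | nil => exact absurd rfl hne
      | cons a b => exact ⟨a, b, rfl⟩
    -- leading-b counts agree
    have hld : ld (c :: l) = ld (c' :: l₂') := by
      obtain ⟨τ₁, hτ₁, hs₁⟩ := germ_one (c :: l)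
      obtain ⟨τ₂, hτ₂, hs₂⟩ := germ_one (c' :: l₂')
      have hττ : τ₁ = τ₂ := by
        apply W_inj (c' :: l₂')
        rw [← h τ₁, hτ₁, hτ₂]
      subst hττ
      set s : ℝ := min ((1/8 : ℝ) ^ ((c :: l).length + 1))
        ((1/8 : ℝ) ^ ((c' :: l₂').length + 1)) with hs
      have hspos : 0 < s := lt_min (by positivity) (by positivity)
      have e1 := hs₁ s hspos (min_le_left _ _)
      have e2 := hs₂ s hspos (min_le_right _ _)
      rw [h] at e1
      rw [e2] at e1
      have hcancel : (2:ℝ) ^ ((c :: l).count true) * (1/2) ^ (ld (c :: l))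
          = 2 ^ ((c' :: l₂').count true) * (1/2) ^ (ld (c' :: l₂')) := by
        have h' : (2:ℝ) ^ ((c' :: l₂').count true) * (1/2) ^ (ld (c' :: l₂')) * s
            = 2 ^ ((c :: l).count true) * (1/2) ^ (ld (c :: l)) * s := by linarith
        exact (mul_right_cancel₀ (ne_of_gt hspos) h').symm
      rw [hA] at hcancel
      have hhalf : ((1:ℝ)/2) ^ (ld (c :: l)) = (1/2) ^ (ld (c' :: l₂')) :=
        mul_left_cancel₀ (by positivity) hcancel
      have hhalf2 : (2:ℝ) ^ (ld (c' :: l₂')) = 2 ^ (ld (c :: l)) := by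
        have e : ∀ k : ℕ, ((1:ℝ)/2) ^ k = ((2:ℝ) ^ k)⁻¹ := by
          intro k; rw [one_div, inv_pow]
        rw [e, e] at hhalf
        exact (inv_inj.mp hhalf).symm
      exact (two_pow_inj hhalf2).symm
    -- heads agree
    have hcc : c = c' := by
      cases c <;> cases c' <;> simp [ld] at hld ⊢
    subst hcc
    -- strip the head and recurse
    have h' : ∀ t : ℝ, W l t = W l₂' t := by
      intro t
      have := h t
      cases c
      · exact b_mono.injective this
      · exact a_mono.injective this
    rw [ih l₂' h']

/-- The submonoid of `F` generated by `x_0⁻¹` and `x_1` is free of rank two: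
distinct words in `x_0⁻¹` and `x_1` represent distinct elements of `F`. -/
theorem thompsonF_free_submonoid (g : Bool → ThompsonF)
    (hg0 : g true = (x 0)⁻¹) (hg1 : g false = x 1) :
    ∀ l₁ l₂ : List Bool, (l₁.map g).prod = (l₂.map g).prod → l₁ = l₂ := by
  intro l₁ l₂ hp
  have hgt : Phi (g true) = (phiT 0)⁻¹ := by rw [hg0, map_inv, Phi_x]
  have hgf : Phi (g false) = phiT 1 := by rw [hg1, Phi_x]
  have hWl : ∀ (l : List Bool) (t : ℝ), (Phi ((l.map g).prod)) t = W l t := by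
    intro l
    induction l with
    | nil => intro t; simp [W]
    | cons c l ih =>
      intro t
      rw [List.map_cons, List.prod_cons, map_mul, Equiv.Perm.mul_apply, ih]
      cases c
      · rw [hgf]
        rfl
      · rw [hgt]
        rfl
  exact main_aux l₁ l₂ (fun t => by rw [← hWl l₁ t, ← hWl l₂ t, hp])
end

section
/- Every positive element of Thompson's group F can be written uniquely in anti-normal form: as x_{i_n} ⋯ x_{i_2} x_{i_1} with i_{k+1} ≥ i_k − 1 for all k. -/
/- ## A faithful-enough representation on `ℚ` -/

/-- The basic piecewise-linear "contraction" with parameter `c`. -/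
def Gfun (c t : ℚ) : ℚ := if t ≤ c then t else if t ≤ c + 2 then (t + c) / 2 else t - 1

/-- Inverse of `Gfun c`. -/
def Ginv (c t : ℚ) : ℚ := if t ≤ c then t else if t ≤ c + 1 then 2 * t - c else t + 1

lemma Gfun_leftInv (c t : ℚ) : Ginv c (Gfun c t) = t := by
  unfold Gfun Ginv; split_ifs <;> linarith

lemma Gfun_rightInv (c t : ℚ) : Gfun c (Ginv c t) = t := by
  unfold Gfun Ginv; split_ifs <;> linarith

lemma Gfun_rel (c d : ℚ) (h : c + 1 ≤ d) (t : ℚ) :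
    Gfun d (Gfun c t) = Gfun c (Gfun (d + 1) t) := by
  unfold Gfun; split_ifs <;> linarith

lemma Gfun_ge (c t : ℚ) : t - 1 ≤ Gfun c t := by
  unfold Gfun; split_ifs <;> linarith

lemma Gfun_eq (c t : ℚ) (h : c + 2 ≤ t) : Gfun c t = t - 1 := by
  unfold Gfun; split_ifs <;> linarith

lemma Gfun_gt (c t : ℚ) (h : t < c + 2) : t - 1 < Gfun c t := by
  unfold Gfun; split_ifs <;> linarith

/-- The permutation of `ℚ` corresponding to the generator `x n`. -/
noncomputable def gp (n : ℕ) : Equiv.Perm ℚ :=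
  ⟨Gfun n, Ginv n, Gfun_leftInv n, Gfun_rightInv n⟩

lemma gp_apply (n : ℕ) (t : ℚ) : gp n t = Gfun n t := rfl

lemma gp_rel (n k : ℕ) (h : k < n) : gp n * gp k = gp k * gp (n + 1) := by
  ext t
  simp only [Equiv.Perm.mul_apply, gp_apply]
  have hc : (k : ℚ) + 1 ≤ n := by exact_mod_cast h
  have := Gfun_rel (k : ℚ) (n : ℚ) hc t
  push_cast
  exact this

/-- Representation homomorphism `ThompsonF →* Equiv.Perm ℚ`. -/
noncomputable def φ : ThompsonF →* Equiv.Perm ℚ :=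
  PresentedGroup.toGroup (f := gp) (by
    rintro r ⟨n, k, hk, rfl⟩
    simp only [map_mul, map_inv, FreeGroup.lift_apply_of]
    rw [mul_inv_eq_one, gp_rel n k hk])

lemma φ_x (n : ℕ) : φ (x n) = gp n := PresentedGroup.toGroup.of _

/-- Product of the permutations associated to a list of indices. -/
noncomputable def prodg (l : List ℕ) : Equiv.Perm ℚ := (l.map gp).prod

lemma prodg_nil : prodg [] = 1 := rfl

lemma prodg_cons (a : ℕ) (r : List ℕ) : prodg (a :: r) = gp a * prodg r := by
  simp [prodg]

lemma φ_prod (l : List ℕ) : φ ((l.map x).prod) = prodg l := by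
  rw [prodg, map_list_prod, List.map_map]
  simp [Function.comp_def, φ_x]

/- ## Key pointwise estimates -/

lemma prodg_ge (l : List ℕ) (t : ℚ) : t - l.length ≤ prodg l t := by
  induction l generalizing t with
  | nil => simp [prodg_nil]
  | cons a r ih =>
    rw [prodg_cons]
    have h1 := ih t
    have h2 := Gfun_ge (a : ℚ) (prodg r t)
    simp only [Equiv.Perm.mul_apply, gp_apply, List.length_cons]
    push_cast
    linarith

lemma prodg_eventually (a : ℕ) (r : List ℕ)
    (hc : (a :: r).Chain' (fun a b => b ≤ a + 1)) (t : ℚ)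
    (ht : (a : ℚ) + r.length + 2 ≤ t) :
    prodg (a :: r) t = t - (r.length + 1) := by
  induction r generalizing a t with
  | nil =>
    rw [prodg_cons, prodg_nil]
    simp only [Equiv.Perm.mul_apply, Equiv.Perm.one_apply, gp_apply, List.length_nil]
    rw [Gfun_eq]
    · push_cast; ring
    · simp only [List.length_nil] at ht; linarith
  | cons a' r' ih =>
    unfold List.Chain' at hc; rw [List.isChain_cons_cons] at hc
    obtain ⟨hab, hc'⟩ := hc
    have hab' : (a' : ℚ) ≤ a + 1 := by exact_mod_cast hab
    have ht' : (a' : ℚ) + r'.length + 2 ≤ t := by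
      simp only [List.length_cons] at ht; push_cast at ht; linarith
    have hrec := ih a' hc' t ht'
    rw [prodg_cons]
    simp only [Equiv.Perm.mul_apply, gp_apply]
    rw [hrec, Gfun_eq]
    · simp only [List.length_cons]; push_cast; ring
    · simp only [List.length_cons] at ht; push_cast at ht ⊢; linarith

lemma prodg_strict (a : ℕ) (r : List ℕ)
    (hc : (a :: r).Chain' (fun a b => b ≤ a + 1)) (t : ℚ)
    (ht : t < (a : ℚ) + r.length + 2) :
    t - (r.length + 1) < prodg (a :: r) t := by
  induction r generalizing a t with
  | nil =>
    rw [prodg_cons, prodg_nil]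
    simp only [Equiv.Perm.mul_apply, Equiv.Perm.one_apply, gp_apply, List.length_nil]
    simp only [List.length_nil] at ht
    have := Gfun_gt (a : ℚ) t (by push_cast at ht ⊢; linarith)
    push_cast
    linarith
  | cons a' r' ih =>
    unfold List.Chain' at hc; rw [List.isChain_cons_cons] at hc
    obtain ⟨hab, hc'⟩ := hc
    rw [prodg_cons]
    simp only [Equiv.Perm.mul_apply, gp_apply, List.length_cons]
    rcases lt_or_ge t ((a' : ℚ) + r'.length + 2) with h | h
    · have hrec := ih a' hc' t h
      have h2 := Gfun_ge (a : ℚ) (prodg (a' :: r') t)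
      push_cast at hrec ⊢
      linarith
    · have hval := prodg_eventually a' r' hc' t h
      rw [hval]
      have hlt : t - (r'.length + 1) < (a : ℚ) + 2 := by
        simp only [List.length_cons] at ht; push_cast at ht ⊢; linarith
      have := Gfun_gt (a : ℚ) (t - (r'.length + 1)) hlt
      push_cast
      linarith

/- ## Uniqueness at the level of permutations -/

lemma prodg_length_eq (a b : ℕ) (r r' : List ℕ)
    (hc : (a :: r).Chain' (fun a b => b ≤ a + 1))
    (hc' : (b :: r').Chain' (fun a b => b ≤ a + 1))
    (h : prodg (a :: r) = prodg (b :: r')) : r.length = r'.length := by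
  set t : ℚ := max ((a : ℚ) + r.length + 2) ((b : ℚ) + r'.length + 2) with htdef
  have h1 := prodg_eventually a r hc t (le_max_left _ _)
  have h2 := prodg_eventually b r' hc' t (le_max_right _ _)
  rw [h] at h1
  rw [h1] at h2
  have : (r.length : ℚ) = r'.length := by linarith
  exact_mod_cast this

lemma prodg_head_not_lt (a b : ℕ) (r r' : List ℕ)
    (hlen : r.length = r'.length)
    (hc : (a :: r).Chain' (fun a b => b ≤ a + 1))
    (hc' : (b :: r').Chain' (fun a b => b ≤ a + 1))
    (h : prodg (a :: r) = prodg (b :: r')) : ¬ a < b := by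
  intro hab
  set t : ℚ := (a : ℚ) + r.length + 2 with htdef
  have h1 := prodg_eventually a r hc t (le_refl _)
  have h2 := prodg_strict b r' hc' t (by
    have : (a : ℚ) < b := by exact_mod_cast hab
    rw [htdef, hlen]; linarith)
  rw [← h, h1] at h2
  have hlenQ : (r.length : ℚ) = r'.length := by exact_mod_cast hlen
  linarith

lemma prodg_inj : ∀ (l l' : List ℕ), l.Chain' (fun a b => b ≤ a + 1) →
    l'.Chain' (fun a b => b ≤ a + 1) → prodg l = prodg l' → l = l' := by
  intro l
  induction l with
  | nil =>
    intro l' _ hc' h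
    cases l' with
    | nil => rfl
    | cons b r' =>
      exfalso
      have h1 := prodg_eventually b r' hc' ((b : ℚ) + r'.length + 2) (le_refl _)
      rw [← h, prodg_nil] at h1
      simp only [Equiv.Perm.one_apply] at h1
      have : (0 : ℚ) < (r'.length : ℚ) + 1 := by positivity
      linarith
  | cons a r ih =>
    intro l' hc hc' h
    cases l' with
    | nil =>
      exfalso
      have h1 := prodg_eventually a r hc ((a : ℚ) + r.length + 2) (le_refl _)
      rw [h, prodg_nil] at h1
      simp only [Equiv.Perm.one_apply] at h1
      have : (0 : ℚ) < (r.length : ℚ) + 1 := by positivity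
      linarith
    | cons b r' =>
      have hlen : r.length = r'.length := prodg_length_eq a b r r' hc hc' h
      have hab : a = b := by
        rcases lt_trichotomy a b with hlt | heq | hgt
        · exact absurd hlt (prodg_head_not_lt a b r r' hlen hc hc' h)
        · exact heq
        · exact absurd hgt (prodg_head_not_lt b a r' r hlen.symm hc' hc h.symm)
      subst hab
      rw [prodg_cons, prodg_cons] at h
      have htail : prodg r = prodg r' := mul_left_cancel h
      have := ih r' hc.tail hc'.tail htail
      rw [this]

/- ## Relations in ThompsonF and existence of anti-normal form -/

lemma xrel (n k : ℕ) (h : k < n) : x n * x k = x k * x (n + 1) := by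
  have hr : (FreeGroup.of n * FreeGroup.of k *
      (FreeGroup.of k * FreeGroup.of (n + 1))⁻¹) ∈ thompsonRels := ⟨n, k, h, rfl⟩
  have h1 : (QuotientGroup.mk (FreeGroup.of n * FreeGroup.of k *
      (FreeGroup.of k * FreeGroup.of (n + 1))⁻¹) : ThompsonF) = 1 :=
    (QuotientGroup.eq_one_iff _).mpr (Subgroup.subset_normalClosure hr)
  have h2 : (QuotientGroup.mk' (Subgroup.normalClosure thompsonRels))
      (FreeGroup.of n * FreeGroup.of k * (FreeGroup.of k * FreeGroup.of (n + 1))⁻¹) = 1 := h1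
  rw [map_mul, map_mul, map_inv, map_mul, mul_inv_eq_one] at h2
  exact h2

/-- Insert a generator `x n` on the left of an anti-normal word, producing an
anti-normal word. -/
def insertAN (n : ℕ) : List ℕ → List ℕ
  | [] => [n]
  | b :: rest => if b ≤ n + 1 then n :: b :: rest else (b - 1) :: insertAN n rest

lemma insertAN_head (n : ℕ) : ∀ (m : List ℕ) (h : ℕ) (t : List ℕ),
    insertAN n m = h :: t → h = n ∨ ∃ c t₂, m = c :: t₂ ∧ h = c - 1 := by
  intro m h t
  cases m with
  | nil => intro he; simp [insertAN] at he; exact Or.inl he.1.symm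
  | cons b rest =>
    intro he
    by_cases hb : b ≤ n + 1
    · simp [insertAN, hb] at he; exact Or.inl he.1.symm
    · simp [insertAN, hb] at he; exact Or.inr ⟨b, rest, rfl, he.1.symm⟩

lemma insertAN_chain (n : ℕ) : ∀ (m : List ℕ),
    m.Chain' (fun a b => b ≤ a + 1) → (insertAN n m).Chain' (fun a b => b ≤ a + 1) := by
  intro m
  induction m with
  | nil => intro _; simp [insertAN, List.Chain']
  | cons b rest ih =>
    intro hc
    unfold List.Chain' at hc; rw [List.isChain_cons] at hc
    obtain ⟨hhead, hrest⟩ := hc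
    by_cases hb : b ≤ n + 1
    · simp only [insertAN, if_pos hb]
      unfold List.Chain'; rw [List.isChain_cons_cons]
      exact ⟨hb, List.isChain_cons.mpr ⟨hhead, hrest⟩⟩
    · simp only [insertAN, if_neg hb]
      unfold List.Chain'; rw [List.isChain_cons]
      refine ⟨?_, ih hrest⟩
      intro y hy
      cases hI : insertAN n rest with
      | nil => rw [hI] at hy; simp at hy
      | cons y' t' =>
        rw [hI] at hy
        simp only [List.head?_cons, Option.mem_some_iff] at hy
        subst hy
        rcases insertAN_head n rest y' t' hI with h1 | ⟨c, t₂, hrest2, h2⟩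
        · omega
        · have hc2 : c ≤ b + 1 := hhead c (by rw [hrest2]; rfl)
          omega

lemma insertAN_prod (n : ℕ) : ∀ (m : List ℕ),
    ((insertAN n m).map x).prod = x n * (m.map x).prod := by
  intro m
  induction m with
  | nil => simp [insertAN]
  | cons b rest ih =>
    by_cases hb : b ≤ n + 1
    · simp only [insertAN, if_pos hb, List.map_cons, List.prod_cons]
    · simp only [insertAN, if_neg hb, List.map_cons, List.prod_cons, ih]
      rw [← mul_assoc, ← mul_assoc]
      congr 1
      have h1 : n < b - 1 := by omega
      have h2 : b - 1 + 1 = b := by omega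
      rw [xrel (b - 1) n h1, h2]

lemma exists_chain (l : List ℕ) :
    ∃ m : List ℕ, m.Chain' (fun a b => b ≤ a + 1) ∧ (m.map x).prod = (l.map x).prod := by
  induction l with
  | nil => exact ⟨[], by simp [List.Chain'], rfl⟩
  | cons n l ih =>
    obtain ⟨m, hc, hp⟩ := ih
    exact ⟨insertAN n m, insertAN_chain n m hc, by
      rw [insertAN_prod, hp]; simp⟩

lemma exists_index_list : ∀ (L : List ThompsonF), (∀ y ∈ L, y ∈ Set.range x) →
    ∃ l : List ℕ, l.map x = L := by
  intro L
  induction L with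
  | nil => exact fun _ => ⟨[], rfl⟩
  | cons y L ih =>
    intro hL
    obtain ⟨n, hn⟩ := hL y (List.mem_cons_self)
    obtain ⟨l, hl⟩ := ih (fun z hz => hL z (List.mem_cons_of_mem y hz))
    exact ⟨n :: l, by rw [List.map_cons, hn, hl]⟩

lemma exists_list_of_mem (g : ThompsonF) (hg : g ∈ Submonoid.closure (Set.range x)) :
    ∃ l : List ℕ, (l.map x).prod = g := by
  obtain ⟨L, hL, hprod⟩ := Submonoid.exists_list_of_mem_closure hg
  obtain ⟨l, hl⟩ := exists_index_list L hL
  exact ⟨l, by rw [hl, hprod]⟩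

/-- Every positive element of `F` has a unique expression in anti-normal form
`x_{i_n} ⋯ x_{i_2} x_{i_1}` where consecutive indices satisfy `i_{k+1} ≥ i_k − 1`;
i.e. reading the word left to right, each index is at least the following index minus one. -/
theorem thompsonF_anti_normal_form (g : ThompsonF)
    (hg : g ∈ Submonoid.closure (Set.range x)) :
    ∃! l : List ℕ, l.Chain' (fun a b => b ≤ a + 1) ∧ (l.map x).prod = g := by
  obtain ⟨l0, hl0⟩ := exists_list_of_mem g hg
  obtain ⟨m, hmc, hmp⟩ := exists_chain l0
  refine ⟨m, ⟨hmc, hmp.trans hl0⟩, ?_⟩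
  rintro m' ⟨hmc', hmp'⟩
  apply prodg_inj m' m hmc' hmc
  have : ((m'.map x).prod) = ((m.map x).prod) := by rw [hmp', hmp.trans hl0]
  calc prodg m' = φ ((m'.map x).prod) := (φ_prod m').symm
    _ = φ ((m.map x).prod) := by rw [this]
    _ = prodg m := φ_prod m
end

section
/- The monoid presented by generators x_0, x_1, x_2, ... and relations x_n x_k = x_k x_{n+1} for k < n is cancellative and any two elements have a common right multiple. -/
/-- The defining relations of the positive monoid of Thompson's group `F`:
`x_n x_k = x_k x_{n+1}` for `k < n`. -/
def thompsonMonRels : FreeMonoid ℕ → FreeMonoid ℕ → Prop := fun a b =>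
  ∃ n k : ℕ, k < n ∧ a = FreeMonoid.of n * FreeMonoid.of k ∧
    b = FreeMonoid.of k * FreeMonoid.of (n + 1)

/-- The positive monoid of Thompson's group `F`. -/
abbrev ThompsonMonoid := PresentedMonoid thompsonMonRels

namespace ThompsonAux

/-- One rewriting step: `x_n x_k → x_k x_{n+1}` for `k < n`, anywhere in the word. -/
inductive Step : List ℕ → List ℕ → Prop
  | head {n k : ℕ} (v : List ℕ) (h : k < n) : Step (n :: k :: v) (k :: (n + 1) :: v)
  | cons (a : ℕ) {t t' : List ℕ} (h : Step t t') : Step (a :: t) (a :: t')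

abbrev RTG := Relation.ReflTransGen Step

lemma Step.append_right {t t' : List ℕ} (h : Step t t') (w : List ℕ) :
    Step (t ++ w) (t' ++ w) := by
  induction h with
  | head v h => exact Step.head _ h
  | cons a _ ih => exact Step.cons a ih

lemma Step.append_left (u : List ℕ) {t t' : List ℕ} (h : Step t t') :
    Step (u ++ t) (u ++ t') := by
  induction u with
  | nil => exact h
  | cons a u ih => exact Step.cons a ih

lemma Step.length_eq {a b : List ℕ} (h : Step a b) : a.length = b.length := by
  induction h with
  | head v h => simp
  | cons a _ ih => simp [ih]

/-- Termination measure. -/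
def mu : List ℕ → ℕ
  | [] => 0
  | a :: t => a * 3 ^ t.length + mu t

lemma mu_lt {a b : List ℕ} (h : Step a b) : mu b < mu a := by
  induction h with
  | head v h =>
    simp only [mu, List.length_cons, pow_succ]
    have hc : 0 < 3 ^ v.length := pow_pos (by norm_num) _
    nlinarith
  | cons a h ih =>
    simp only [mu, h.length_eq]
    omega

lemma rtg_cons (a : ℕ) {t t' : List ℕ} (h : RTG t t') : RTG (a :: t) (a :: t') := by
  induction h with
  | refl => exact .refl
  | tail _ s ih => exact ih.tail (Step.cons a s)

lemma rtg_append_right {t t' : List ℕ} (h : RTG t t') (w : List ℕ) :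
    RTG (t ++ w) (t' ++ w) := by
  induction h with
  | refl => exact .refl
  | tail _ s ih => exact ih.tail (s.append_right w)

lemma rtg_append_left (u : List ℕ) {t t' : List ℕ} (h : RTG t t') :
    RTG (u ++ t) (u ++ t') := by
  induction h with
  | refl => exact .refl
  | tail _ s ih => exact ih.tail (s.append_left u)

/-- Local confluence. -/
lemma locConf {a b c : List ℕ} (h1 : Step a b) (h2 : Step a c) :
    ∃ d, RTG b d ∧ RTG c d := by
  induction h1 generalizing c with
  | @head n k v hkn =>
    cases h2 with
    | head _ h => exact ⟨_, .refl, .refl⟩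
    | cons _ h2' =>
      cases h2' with
      | head v' hjk =>
        rename_i j
        refine ⟨j :: (k + 1) :: (n + 2) :: v', ?_, ?_⟩
        · have s1 : Step (k :: (n+1) :: j :: v') (k :: j :: (n+2) :: v') :=
            Step.cons k (Step.head v' (by omega))
          have s2 : Step (k :: j :: (n+2) :: v') (j :: (k+1) :: (n+2) :: v') :=
            Step.head _ hjk
          exact (Relation.ReflTransGen.single s1).tail s2
        · have s1 : Step (n :: j :: (k+1) :: v') (j :: (n+1) :: (k+1) :: v') :=
            Step.head _ (by omega)
          have s2 : Step (j :: (n+1) :: (k+1) :: v') (j :: (k+1) :: (n+2) :: v') :=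
            Step.cons j (Step.head _ (by omega))
          exact (Relation.ReflTransGen.single s1).tail s2
      | cons _ h2'' =>
        exact ⟨k :: (n+1) :: _, (rtg_cons _ (rtg_cons _ (.single h2''))),
          .single (Step.head _ hkn)⟩
  | @cons x t t' h1' ih =>
    cases h2 with
    | head v hkn =>
      rename_i k
      cases h1' with
      | head v' hjk =>
        rename_i j
        refine ⟨j :: (k + 1) :: (x + 2) :: v', ?_, ?_⟩
        · have s1 : Step (x :: j :: (k+1) :: v') (j :: (x+1) :: (k+1) :: v') :=
            Step.head _ (by omega)
          have s2 : Step (j :: (x+1) :: (k+1) :: v') (j :: (k+1) :: (x+2) :: v') :=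
            Step.cons j (Step.head _ (by omega))
          exact (Relation.ReflTransGen.single s1).tail s2
        · have s1 : Step (k :: (x+1) :: j :: v') (k :: j :: (x+2) :: v') :=
            Step.cons k (Step.head _ (by omega))
          have s2 : Step (k :: j :: (x+2) :: v') (j :: (k+1) :: (x+2) :: v') :=
            Step.head _ hjk
          exact (Relation.ReflTransGen.single s1).tail s2
      | cons _ h1'' =>
        exact ⟨k :: (x+1) :: _, .single (Step.head _ hkn),
          rtg_cons _ (rtg_cons _ (.single h1''))⟩
    | cons _ h2' =>
      obtain ⟨d, hd1, hd2⟩ := ih h2'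
      exact ⟨x :: d, rtg_cons _ hd1, rtg_cons _ hd2⟩

def Joinable (a b : List ℕ) : Prop := ∃ d, RTG a d ∧ RTG b d

lemma confluent : ∀ a b c : List ℕ, RTG a b → RTG a c → Joinable b c := by
  suffices H : ∀ N a, mu a = N → ∀ b c, RTG a b → RTG a c → Joinable b c by
    intro a b c; exact H (mu a) a rfl b c
  intro N
  induction N using Nat.strong_induction_on with
  | _ N ih =>
    rintro a rfl b c hab hac
    rcases hab.cases_head with rfl | ⟨b₁, hb₁, hb⟩
    · exact ⟨c, hac, .refl⟩
    rcases hac.cases_head with rfl | ⟨c₁, hc₁, hc⟩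
    · exact ⟨b, .refl, (Relation.ReflTransGen.single hb₁).trans hb⟩
    obtain ⟨e, he1, he2⟩ := locConf hb₁ hc₁
    obtain ⟨f, hf1, hf2⟩ := ih (mu b₁) (mu_lt hb₁) b₁ rfl b e hb he1
    obtain ⟨d, hd1, hd2⟩ := ih (mu c₁) (mu_lt hc₁) c₁ rfl c f hc (he2.trans hf2)
    exact ⟨d, hf1.trans hd2, hd1⟩

lemma Joinable.refl (a : List ℕ) : Joinable a a := ⟨a, .refl, .refl⟩

lemma Joinable.symm {a b : List ℕ} (h : Joinable a b) : Joinable b a :=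
  ⟨h.choose, h.choose_spec.2, h.choose_spec.1⟩

lemma Joinable.trans {a b c : List ℕ} (h1 : Joinable a b) (h2 : Joinable b c) :
    Joinable a c := by
  obtain ⟨d, had, hbd⟩ := h1
  obtain ⟨e, hbe, hce⟩ := h2
  obtain ⟨f, hdf, hef⟩ := confluent b d e hbd hbe
  exact ⟨f, had.trans hdf, hce.trans hef⟩


/-! ### Normal forms -/

abbrev Srt (l : List ℕ) : Prop := l.Pairwise (· ≤ ·)

lemma not_step_of_sorted {l l' : List ℕ} (h : Step l l') (hs : Srt l) : False := by
  induction h with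
  | head v h =>
    have := (List.pairwise_cons.1 hs).1 _ (List.mem_cons_self)
    omega
  | cons a _ ih => exact ih (List.pairwise_cons.1 hs).2

lemma rtg_sorted_eq {l m : List ℕ} (hs : Srt l) (h : RTG l m) : l = m := by
  rcases h.cases_head with rfl | ⟨l₁, hs1, _⟩
  · rfl
  · exact absurd hs (fun hs => not_step_of_sorted hs1 hs)

lemma joinable_sorted_eq {l m : List ℕ} (hl : Srt l) (hm : Srt m)
    (h : Joinable l m) : l = m := by
  obtain ⟨d, h1, h2⟩ := h
  rw [rtg_sorted_eq hl h1, rtg_sorted_eq hm h2]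

lemma sorted_or_step (l : List ℕ) : Srt l ∨ ∃ l', Step l l' := by
  induction l with
  | nil => exact Or.inl (List.Pairwise.nil)
  | cons a t ih =>
    rcases ih with hs | ⟨l', hl'⟩
    · cases t with
      | nil => exact Or.inl (List.pairwise_singleton _ a)
      | cons b t' =>
        rcases le_or_gt a b with hab | hba
        · left
          refine List.pairwise_cons.2 ⟨fun y hy => ?_, hs⟩
          rcases List.mem_cons.1 hy with rfl | hy
          · exact hab
          · exact hab.trans ((List.pairwise_cons.1 hs).1 _ hy)
        · exact Or.inr ⟨_, Step.head t' hba⟩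
    · exact Or.inr ⟨_, Step.cons a hl'⟩

lemma exists_nf (l : List ℕ) : ∃ m, Srt m ∧ RTG l m := by
  suffices H : ∀ N l, mu l = N → ∃ m, Srt m ∧ RTG l m from H (mu l) l rfl
  intro N
  induction N using Nat.strong_induction_on with
  | _ N ih =>
    rintro l rfl
    rcases sorted_or_step l with hs | ⟨l', hl'⟩
    · exact ⟨l, hs, .refl⟩
    · obtain ⟨m, hm, h⟩ := ih (mu l') (mu_lt hl') l' rfl
      exact ⟨m, hm, Relation.ReflTransGen.head hl' h⟩

/-! ### Left insertion -/

def ins : ℕ → List ℕ → List ℕ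
  | x, [] => [x]
  | x, h :: t => if h < x then h :: ins (x+1) t else x :: h :: t

lemma ins_mem {y : ℕ} : ∀ {x : ℕ} {m : List ℕ}, y ∈ ins x m → x ≤ y ∨ y ∈ m := by
  intro x m
  induction m generalizing x with
  | nil => intro h; simp [ins] at h; omega
  | cons h t ih =>
    intro hy
    rw [ins] at hy
    split_ifs at hy with hx
    · rcases List.mem_cons.1 hy with rfl | hy
      · exact Or.inr (List.mem_cons_self)
      · rcases ih hy with h1 | h1
        · exact Or.inl (by omega)
        · exact Or.inr (List.mem_cons_of_mem _ h1)
    · rcases List.mem_cons.1 hy with rfl | hy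
      · exact Or.inl le_rfl
      · exact Or.inr hy

lemma ins_sorted : ∀ {x : ℕ} {m : List ℕ}, Srt m → Srt (ins x m) := by
  intro x m
  induction m generalizing x with
  | nil => intro _; exact List.pairwise_singleton _ x
  | cons h t ih =>
    intro hs
    rw [ins]
    obtain ⟨hh, ht⟩ := List.pairwise_cons.1 hs
    split_ifs with hx
    · refine List.pairwise_cons.2 ⟨fun y hy => ?_, ih ht⟩
      rcases ins_mem hy with h1 | h1
      · omega
      · exact hh _ h1
    · refine List.pairwise_cons.2 ⟨fun y hy => ?_, hs⟩
      rcases List.mem_cons.1 hy with rfl | hy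
      · omega
      · exact le_trans (by omega) (hh _ hy)

lemma ins_rtg : ∀ {x : ℕ} {m : List ℕ}, RTG (x :: m) (ins x m) := by
  intro x m
  induction m generalizing x with
  | nil => exact .refl
  | cons h t ih =>
    rw [ins]
    split_ifs with hx
    · exact Relation.ReflTransGen.head (Step.head t hx) (rtg_cons h ih)
    · exact .refl

lemma ins_ne_nil {x : ℕ} {m : List ℕ} : ins x m ≠ [] := by
  cases m with
  | nil => simp [ins]
  | cons h t => rw [ins]; split_ifs <;> simp

lemma ins_inj : ∀ {x : ℕ} {m m' : List ℕ}, ins x m = ins x m' → m = m' := by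
  intro x m
  induction m generalizing x with
  | nil =>
    intro m' H
    cases m' with
    | nil => rfl
    | cons h' t' =>
      rw [ins, ins] at H
      split_ifs at H with hx
      · exact absurd (List.tail_eq_of_cons_eq H).symm ins_ne_nil
      · exact absurd (congrArg List.length H) (by simp)
  | cons h t ih =>
    intro m' H
    cases m' with
    | nil =>
      rw [ins, ins] at H
      split_ifs at H with hx
      · exact absurd (List.tail_eq_of_cons_eq H) ins_ne_nil
      · exact absurd (congrArg List.length H) (by simp)
    | cons h' t' =>
      rw [ins, ins] at H
      split_ifs at H with hx hx'
      · obtain ⟨rfl, H2⟩ := List.cons_eq_cons.1 H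
        rw [ih H2]
      · obtain ⟨rfl, _⟩ := List.cons_eq_cons.1 H
        omega
      · obtain ⟨rfl, _⟩ := List.cons_eq_cons.1 H
        omega
      · obtain ⟨_, H2⟩ := List.cons_eq_cons.1 H
        rw [H2]


/-! ### Right insertion -/

def insRA : ℕ → List ℕ → List ℕ
  | x, [] => [x]
  | x, h :: t => if x < h then (h+1) :: insRA x t else x :: h :: t

def insR (m : List ℕ) (x : ℕ) : List ℕ := (insRA x m.reverse).reverse

lemma insRA_ne_nil {x : ℕ} {m : List ℕ} : insRA x m ≠ [] := by
  cases m with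
  | nil => simp [insRA]
  | cons h t => rw [insRA]; split_ifs <;> simp

lemma insRA_inj : ∀ {x : ℕ} {m m' : List ℕ}, insRA x m = insRA x m' → m = m' := by
  intro x m
  induction m generalizing x with
  | nil =>
    intro m' H
    cases m' with
    | nil => rfl
    | cons h' t' =>
      rw [insRA, insRA] at H
      split_ifs at H with hx
      · obtain ⟨h1, _⟩ := List.cons_eq_cons.1 H
        omega
      · exact absurd (congrArg List.length H) (by simp)
  | cons h t ih =>
    intro m' H
    cases m' with
    | nil =>
      rw [insRA, insRA] at H
      split_ifs at H with hx
      · obtain ⟨h1, _⟩ := List.cons_eq_cons.1 H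
        omega
      · exact absurd (congrArg List.length H) (by simp)
    | cons h' t' =>
      rw [insRA, insRA] at H
      split_ifs at H with hx hx'
      · obtain ⟨h1, H2⟩ := List.cons_eq_cons.1 H
        have : h = h' := by omega
        rw [this, ih H2]
      · obtain ⟨h1, _⟩ := List.cons_eq_cons.1 H
        omega
      · obtain ⟨h1, _⟩ := List.cons_eq_cons.1 H
        omega
      · obtain ⟨_, H2⟩ := List.cons_eq_cons.1 H
        rw [H2]

lemma insRA_le {B x : ℕ} : ∀ {m : List ℕ}, (∀ z ∈ m, z ≤ B) → x ≤ B →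
    ∀ y ∈ insRA x m, y ≤ B + 1 := by
  intro m
  induction m with
  | nil => intro _ hx y hy; simp [insRA] at hy; omega
  | cons h t ih =>
    intro hm hx y hy
    rw [insRA] at hy
    split_ifs at hy with hxh
    · rcases List.mem_cons.1 hy with rfl | hy
      · have := hm h (List.mem_cons_self); omega
      · exact ih (fun z hz => hm z (List.mem_cons_of_mem _ hz)) hx y hy
    · rcases List.mem_cons.1 hy with rfl | hy
      · omega
      · rcases List.mem_cons.1 hy with rfl | hy
        · have := hm y (List.mem_cons_self); omega
        · have := hm y (List.mem_cons_of_mem _ hy); omega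

lemma sorted_append_singleton {w : List ℕ} {x : ℕ} (hw : Srt w)
    (hle : ∀ y ∈ w, y ≤ x) : Srt (w ++ [x]) := by
  refine List.pairwise_append.2 ⟨hw, List.pairwise_singleton _ x, ?_⟩
  intro a ha b hb
  rw [List.mem_singleton] at hb
  subst hb
  exact hle a ha

lemma insR_spec {x : ℕ} : ∀ {m : List ℕ}, Srt m →
    Srt (insR m x) ∧ RTG (m ++ [x]) (insR m x) := by
  intro m
  induction m using List.reverseRecOn with
  | nil =>
    intro _
    constructor
    · exact List.pairwise_singleton _ x
    · exact .refl
  | append_singleton m' h ih =>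
    intro hs
    have hm' : Srt m' := (List.pairwise_append.1 hs).1
    have hle : ∀ z ∈ m', z ≤ h := by
      intro z hz
      exact (List.pairwise_append.1 hs).2.2 z hz h (List.mem_singleton_self h)
    have hrev : (m' ++ [h]).reverse = h :: m'.reverse := by simp
    rw [insR, hrev, insRA]
    split_ifs with hxh
    · obtain ⟨ihs, ihr⟩ := ih hm'
      rw [List.reverse_cons]
      constructor
      · refine sorted_append_singleton ?_ ?_
        · rw [insR] at ihs; exact ihs
        · intro y hy
          rw [List.mem_reverse] at hy
          refine insRA_le (fun z hz => ?_) (by omega) y hy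
          rw [List.mem_reverse] at hz
          exact hle z hz
      · have step1 : Step (m' ++ [h] ++ [x]) (m' ++ [x] ++ [h+1]) := by
          have : Step ([h, x] : List ℕ) [x, h+1] := Step.head [] hxh
          have := this.append_left m'
          simpa using this
        have step2 : RTG (m' ++ [x] ++ [h+1]) ((insRA x m'.reverse).reverse ++ [h+1]) := by
          refine rtg_append_right ?_ [h+1]
          rw [insR] at ihr; exact ihr
        exact Relation.ReflTransGen.head step1 step2
    · rw [List.reverse_cons, List.reverse_cons, List.reverse_reverse]
      constructor
      · refine sorted_append_singleton hs ?_
        intro y hy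
        rcases List.mem_append.1 hy with hy | hy
        · exact le_trans (hle y hy) (by omega)
        · rw [List.mem_singleton] at hy; omega
      · exact .refl

lemma insR_inj {x : ℕ} {m m' : List ℕ} (H : insR m x = insR m' x) : m = m' := by
  rw [insR, insR] at H
  have := insRA_inj (List.reverse_injective H)
  exact List.reverse_injective this

/-! ### Cancellation on Joinable -/

lemma joinable_cons_cancel {x : ℕ} {b c : List ℕ}
    (h : Joinable (x :: b) (x :: c)) : Joinable b c := by
  obtain ⟨mb, smb, hb⟩ := exists_nf b
  obtain ⟨mc, smc, hc⟩ := exists_nf c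
  have h1 : RTG (x :: b) (ins x mb) := (rtg_cons x hb).trans ins_rtg
  have h2 : RTG (x :: c) (ins x mc) := (rtg_cons x hc).trans ins_rtg
  have hj : Joinable (ins x mb) (ins x mc) :=
    (Joinable.trans ⟨_, .refl, h1⟩ (h.trans ⟨_, h2, .refl⟩))
  have := joinable_sorted_eq (ins_sorted smb) (ins_sorted smc) hj
  have hmbc : mb = mc := ins_inj this
  exact ⟨mb, hb, hmbc ▸ hc⟩

lemma joinable_append_left_cancel {b c : List ℕ} :
    ∀ u : List ℕ, Joinable (u ++ b) (u ++ c) → Joinable b c := by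
  intro u
  induction u with
  | nil => intro h; simpa using h
  | cons a u ih =>
    intro h
    exact ih (joinable_cons_cancel h)

lemma joinable_snoc_cancel {x : ℕ} {b c : List ℕ}
    (h : Joinable (b ++ [x]) (c ++ [x])) : Joinable b c := by
  obtain ⟨mb, smb, hb⟩ := exists_nf b
  obtain ⟨mc, smc, hc⟩ := exists_nf c
  obtain ⟨sb, rb⟩ := insR_spec (x := x) smb
  obtain ⟨sc, rc⟩ := insR_spec (x := x) smc
  have h1 : RTG (b ++ [x]) (insR mb x) := (rtg_append_right hb [x]).trans rb
  have h2 : RTG (c ++ [x]) (insR mc x) := (rtg_append_right hc [x]).trans rc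
  have hj : Joinable (insR mb x) (insR mc x) :=
    (Joinable.trans ⟨_, .refl, h1⟩ (h.trans ⟨_, h2, .refl⟩))
  have := joinable_sorted_eq sb sc hj
  have hmbc : mb = mc := insR_inj this
  exact ⟨mb, hb, hmbc ▸ hc⟩

lemma joinable_append_right_cancel {b c : List ℕ} :
    ∀ u : List ℕ, Joinable (b ++ u) (c ++ u) → Joinable b c := by
  intro u
  induction u using List.reverseRecOn generalizing b c with
  | nil => intro h; simpa using h
  | append_singleton u y ih =>
    intro h
    rw [← List.append_assoc, ← List.append_assoc] at h
    exact ih (joinable_snoc_cancel h)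


/-! ### Bridge to the presented monoid -/

lemma rtg_eqvgen {a b : List ℕ} (h : RTG a b) : Relation.EqvGen Step a b := by
  induction h with
  | refl => exact Relation.EqvGen.refl _
  | tail _ s ih => exact Relation.EqvGen.trans _ _ _ ih (Relation.EqvGen.rel _ _ s)

lemma joinable_iff_eqvgen {a b : List ℕ} : Joinable a b ↔ Relation.EqvGen Step a b := by
  constructor
  · rintro ⟨d, h1, h2⟩
    exact Relation.EqvGen.trans _ _ _ (rtg_eqvgen h1) (Relation.EqvGen.symm _ _ (rtg_eqvgen h2))
  · intro h
    induction h with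
    | rel x y h => exact ⟨y, .single h, .refl⟩
    | refl x => exact Joinable.refl x
    | symm x y _ ih => exact ih.symm
    | trans x y z _ _ ih1 ih2 => exact ih1.trans ih2

lemma eqvgen_append_right {a b : List ℕ} (c : List ℕ) (h : Relation.EqvGen Step a b) :
    Relation.EqvGen Step (a ++ c) (b ++ c) := by
  induction h with
  | rel x y h => exact Relation.EqvGen.rel _ _ (h.append_right c)
  | refl x => exact Relation.EqvGen.refl _
  | symm x y _ ih => exact Relation.EqvGen.symm _ _ ih
  | trans x y z _ _ ih1 ih2 => exact Relation.EqvGen.trans _ _ _ ih1 ih2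

lemma eqvgen_append_left {a b : List ℕ} (c : List ℕ) (h : Relation.EqvGen Step a b) :
    Relation.EqvGen Step (c ++ a) (c ++ b) := by
  induction h with
  | rel x y h => exact Relation.EqvGen.rel _ _ (h.append_left c)
  | refl x => exact Relation.EqvGen.refl _
  | symm x y _ ih => exact Relation.EqvGen.symm _ _ ih
  | trans x y z _ _ ih1 ih2 => exact Relation.EqvGen.trans _ _ _ ih1 ih2

lemma eqvgen_append {a b c d : List ℕ} (h1 : Relation.EqvGen Step a b)
    (h2 : Relation.EqvGen Step c d) : Relation.EqvGen Step (a ++ c) (b ++ d) :=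
  Relation.EqvGen.trans _ _ _ (eqvgen_append_right c h1) (eqvgen_append_left b h2)

lemma step_con {a b : List ℕ} (h : Step a b) :
    conGen thompsonMonRels (FreeMonoid.ofList a) (FreeMonoid.ofList b) := by
  induction h with
  | @head n k v hkn =>
    have base : conGen thompsonMonRels (FreeMonoid.of n * FreeMonoid.of k)
        (FreeMonoid.of k * FreeMonoid.of (n+1)) :=
      ConGen.Rel.of _ _ ⟨n, k, hkn, rfl, rfl⟩
    exact ConGen.Rel.mul base (ConGen.Rel.refl (FreeMonoid.ofList v))
  | cons a _ ih => exact ConGen.Rel.mul (ConGen.Rel.refl (FreeMonoid.of a)) ih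

lemma eqvgen_con {a b : List ℕ} (h : Relation.EqvGen Step a b) :
    conGen thompsonMonRels (FreeMonoid.ofList a) (FreeMonoid.ofList b) := by
  induction h with
  | rel x y h => exact step_con h
  | refl x => exact ConGen.Rel.refl _
  | symm x y _ ih => exact ConGen.Rel.symm ih
  | trans x y z _ _ ih1 ih2 => exact ConGen.Rel.trans ih1 ih2

lemma con_eqvgen {a b : FreeMonoid ℕ} (h : conGen thompsonMonRels a b) :
    Relation.EqvGen Step a.toList b.toList := by
  have h' : ConGen.Rel thompsonMonRels a b := h
  clear h
  induction h' with
  | of x y hxy =>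
    obtain ⟨n, k, hk, rfl, rfl⟩ := hxy
    exact Relation.EqvGen.rel _ _ (Step.head [] hk)
  | refl x => exact Relation.EqvGen.refl _
  | symm _ ih => exact Relation.EqvGen.symm _ _ ih
  | trans _ _ ih1 ih2 => exact Relation.EqvGen.trans _ _ _ ih1 ih2
  | mul _ _ ih1 ih2 => exact eqvgen_append ih1 ih2

lemma mk_eq_iff {a b : FreeMonoid ℕ} :
    PresentedMonoid.mk thompsonMonRels a = PresentedMonoid.mk thompsonMonRels b ↔
      Joinable a.toList b.toList := by
  have H : PresentedMonoid.mk thompsonMonRels a = PresentedMonoid.mk thompsonMonRels b ↔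
      conGen thompsonMonRels a b := Con.eq _
  rw [H, joinable_iff_eqvgen]
  constructor
  · exact con_eqvgen
  · intro h
    exact eqvgen_con h

/-! ### Common right multiples -/

abbrev X (n : ℕ) : ThompsonMonoid := PresentedMonoid.of thompsonMonRels n

lemma rel_X {n k : ℕ} (h : k < n) : X n * X k = X k * X (n+1) := by
  have : PresentedMonoid.mk thompsonMonRels (FreeMonoid.of n * FreeMonoid.of k) =
      PresentedMonoid.mk thompsonMonRels (FreeMonoid.of k * FreeMonoid.of (n+1)) :=
    (Con.eq _).mpr (ConGen.Rel.of _ _ ⟨n, k, h, rfl, rfl⟩)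
  rw [map_mul, map_mul] at this; exact this

lemma mk_cons (m : ℕ) (t : List ℕ) :
    PresentedMonoid.mk thompsonMonRels (FreeMonoid.ofList (m :: t)) =
      X m * PresentedMonoid.mk thompsonMonRels (FreeMonoid.ofList t) := by
  rw [FreeMonoid.ofList_cons, map_mul]
  rfl

lemma exists_common_with_gen : ∀ (l : List ℕ) (n : ℕ), ∃ e f : ThompsonMonoid,
    PresentedMonoid.mk thompsonMonRels (FreeMonoid.ofList l) * e = X n * f := by
  intro l
  induction l with
  | nil => exact fun n => ⟨X n, 1, by simp⟩
  | cons m t ih =>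
    intro n
    rcases Nat.lt_trichotomy m n with h | rfl | h
    · obtain ⟨e, f, hef⟩ := ih (n+1)
      refine ⟨e, X m * f, ?_⟩
      rw [mk_cons, mul_assoc, hef, ← mul_assoc, ← rel_X h, mul_assoc]
    · exact ⟨1, PresentedMonoid.mk thompsonMonRels (FreeMonoid.ofList t), by
        rw [mk_cons, mul_one]⟩
    · obtain ⟨e, f, hef⟩ := ih n
      refine ⟨e, X (m+1) * f, ?_⟩
      rw [mk_cons, mul_assoc, hef, ← mul_assoc, rel_X h, mul_assoc]

lemma exists_common : ∀ (l : List ℕ) (b : ThompsonMonoid), ∃ c d : ThompsonMonoid,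
    PresentedMonoid.mk thompsonMonRels (FreeMonoid.ofList l) * c = b * d := by
  intro l
  induction l with
  | nil => exact fun b => ⟨b, 1, by simp⟩
  | cons n t ih =>
    intro b
    obtain ⟨w, rfl⟩ := PresentedMonoid.surjective_mk b
    obtain ⟨e, f, hef⟩ := exists_common_with_gen w.toList n
    rw [FreeMonoid.ofList_toList] at hef
    obtain ⟨g, d', hg⟩ := ih f
    refine ⟨g, e * d', ?_⟩
    rw [mk_cons, mul_assoc, hg, ← mul_assoc, ← hef, mul_assoc]

end ThompsonAux

open ThompsonAux in
/-- The positive monoid of `F` is (left and right) cancellative and any two of its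
elements have a common right multiple. -/
theorem thompsonMonoid_cancellative_and_right_multiples :
    (∀ a b c : ThompsonMonoid, a * b = a * c → b = c) ∧
    (∀ a b c : ThompsonMonoid, a * c = b * c → a = b) ∧
    (∀ a b : ThompsonMonoid, ∃ c d : ThompsonMonoid, a * c = b * d) := by
  refine ⟨?_, ?_, ?_⟩
  · intro a b c h
    obtain ⟨la, rfl⟩ := PresentedMonoid.surjective_mk a
    obtain ⟨lb, rfl⟩ := PresentedMonoid.surjective_mk b
    obtain ⟨lc, rfl⟩ := PresentedMonoid.surjective_mk c
    rw [← map_mul, ← map_mul] at h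
    have hj : Joinable (la.toList ++ lb.toList) (la.toList ++ lc.toList) := mk_eq_iff.1 h
    exact mk_eq_iff.2 (joinable_append_left_cancel _ hj)
  · intro a b c h
    obtain ⟨la, rfl⟩ := PresentedMonoid.surjective_mk a
    obtain ⟨lb, rfl⟩ := PresentedMonoid.surjective_mk b
    obtain ⟨lc, rfl⟩ := PresentedMonoid.surjective_mk c
    rw [← map_mul, ← map_mul] at h
    have hj : Joinable (la.toList ++ lc.toList) (lb.toList ++ lc.toList) := mk_eq_iff.1 h
    exact mk_eq_iff.2 (joinable_append_right_cancel _ hj)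
  · intro a b
    obtain ⟨la, rfl⟩ := PresentedMonoid.surjective_mk a
    obtain ⟨c, d, hcd⟩ := exists_common la.toList b
    rw [FreeMonoid.ofList_toList] at hcd
    exact ⟨c, d, hcd⟩
end

section
/- Let t_{-1}(x) = 0 and t_k(x) = t_{k-1}(x)² + x for k ≥ 0. For each k ≥ 1 there is a unique positive real p_k with t_k(p_k) = 1, and lim_{k→∞} p_k = 1/4. -/
/-- The polynomials `t_k` counting binary trees of height at most `k` by number of leaves:
`t_{-1} = 0` and `t_k(x) = t_{k-1}(x)² + x`, so (indexing from `0`) `t 0 x = x` and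
`t (k+1) x = (t k x)² + x`. -/
def t : ℕ → ℝ → ℝ
  | 0, x => x
  | (k + 1), x => (t k x) ^ 2 + x

lemma t_zero (k : ℕ) : t k 0 = 0 := by
  induction k with
  | zero => simp [t]
  | succ k ih => simp [t, ih]

lemma t_cont (k : ℕ) : Continuous (t k) := by
  induction k with
  | zero => exact continuous_id
  | succ k ih =>
    show Continuous fun x => (t k x) ^ 2 + x
    exact (ih.pow 2).add continuous_id

lemma t_nonneg (k : ℕ) {x : ℝ} (hx : 0 ≤ x) : 0 ≤ t k x := by
  induction k with
  | zero => exact hx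
  | succ k ih =>
    show 0 ≤ (t k x) ^ 2 + x
    positivity

lemma t_mono (k : ℕ) {x y : ℝ} (hx : 0 ≤ x) (hxy : x < y) : t k x < t k y := by
  induction k with
  | zero => exact hxy
  | succ k ih =>
    show (t k x) ^ 2 + x < (t k y) ^ 2 + y
    nlinarith [t_nonneg k hx, ih]

lemma t_quarter (k : ℕ) : t k (1/4) ≤ 1/2 := by
  induction k with
  | zero => norm_num [t]
  | succ k ih =>
    show (t k (1/4)) ^ 2 + 1/4 ≤ 1/2
    nlinarith [t_nonneg k (by norm_num : (0:ℝ) ≤ 1/4)]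

lemma t_one (k : ℕ) : 1 ≤ t k 1 := by
  induction k with
  | zero => norm_num [t]
  | succ k ih =>
    show 1 ≤ (t k 1) ^ 2 + 1
    nlinarith

lemma t_lower (k : ℕ) {x : ℝ} : x + k * (x - 1/4) ≤ t k x := by
  induction k with
  | zero => simp [t]
  | succ k ih =>
    have h : t (k+1) x = (t k x) ^ 2 + x := rfl
    push_cast
    nlinarith [sq_nonneg (t k x - 1/2)]

/-- For each `k ≥ 1` there is a unique positive real `p_k` with `t_k(p_k) = 1`, and
`p_k → 1/4` as `k → ∞`. -/
theorem roots_tend_to_quarter :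
    (∀ k : ℕ, 1 ≤ k → ∃! p : ℝ, 0 < p ∧ t k p = 1) ∧
    ∀ p : ℕ → ℝ, (∀ k : ℕ, 1 ≤ k → 0 < p k ∧ t k (p k) = 1) →
      Filter.Tendsto p Filter.atTop (nhds (1 / 4)) := by
  constructor
  · intro k _
    have h01 : (0:ℝ) ≤ 1 := by norm_num
    have hmem : (1:ℝ) ∈ Set.Icc (t k 0) (t k 1) := by
      constructor
      · rw [t_zero]; norm_num
      · exact t_one k
    obtain ⟨p, hp, hpt⟩ := intermediate_value_Icc h01 (t_cont k).continuousOn hmem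
    have hppos : 0 < p := by
      rcases lt_or_eq_of_le hp.1 with h | h
      · exact h
      · exfalso; rw [← h, t_zero] at hpt; norm_num at hpt
    refine ⟨p, ⟨hppos, hpt⟩, ?_⟩
    rintro q ⟨hqpos, hqt⟩
    by_contra hne
    rcases lt_or_gt_of_ne hne with h | h
    · have := t_mono k hqpos.le h
      rw [hqt, hpt] at this; exact lt_irrefl _ this
    · have := t_mono k hppos.le h
      rw [hqt, hpt] at this; exact lt_irrefl _ this
  · intro p hp
    rw [tendsto_order]
    constructor
    · intro a ha
      filter_upwards [Filter.eventually_ge_atTop 1] with k hk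
      have ⟨hpos, heq⟩ := hp k hk
      -- p k > 1/4 since t k (1/4) ≤ 1/2 < 1 = t k (p k)
      have h14 : (1:ℝ)/4 < p k := by
        by_contra hle
        push_neg at hle
        rcases lt_or_eq_of_le hle with h | h
        · have := t_mono k hpos.le h
          rw [heq] at this
          linarith [t_quarter k]
        · rw [h] at heq
          linarith [t_quarter k]
      linarith
    · intro b hb
      set x := min b (1/2) with hx
      have hx4 : 1/4 < x := lt_min hb (by norm_num)
      have hxb : x ≤ b := min_le_left _ _
      obtain ⟨K, hK⟩ := exists_nat_ge (1 / (x - 1/4))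
      filter_upwards [Filter.eventually_ge_atTop (max 1 K)] with k hk
      have hk1 : 1 ≤ k := le_trans (le_max_left _ _) hk
      have hkK : K ≤ k := le_trans (le_max_right _ _) hk
      have ⟨hpos, heq⟩ := hp k hk1
      have hxpos : 0 < x - 1/4 := by linarith
      have hk' : 1 / (x - 1/4) ≤ (k:ℝ) := le_trans hK (by exact_mod_cast hkK)
      have h1 : 1 ≤ (k:ℝ) * (x - 1/4) := by
        rw [div_le_iff₀ hxpos] at hk'
        linarith
      have ht : 1 < t k x := by
        have := t_lower k (x := x)
        linarith
      -- t k (p k) = 1 < t k x ⇒ p k < x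
      have hpk : p k < x := by
        by_contra hle
        push_neg at hle
        rcases lt_or_eq_of_le hle with h | h
        · have := t_mono k (by linarith : (0:ℝ) ≤ x) h
          rw [heq] at this; linarith
        · rw [← h] at heq; linarith
      linarith
end

section
/- Let k ≥ 0 and let f_n be the number of sequences of binary trees (forests) with n leaves total, each tree of height at most k. Then f_n satisfies f_n = Σ_{ℓ=1}^{2^k} t_{ℓ,k} f_{n−ℓ}, where t_{ℓ,k} is the number of binary trees with ℓ leaves and height at most k, and lim_{n→∞} f_{n−1}/f_n exists and equals the unique positive root p of Σ_{ℓ=1}^{2^k} t_{ℓ,k} p^ℓ = 1. -/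
/-- Finite binary trees. -/
inductive BinTree : Type
  | leaf : BinTree
  | node : BinTree → BinTree → BinTree

/-- The number of leaves of a binary tree. -/
def BinTree.leaves : BinTree → ℕ
  | .leaf => 1
  | .node l r => l.leaves + r.leaves

/-- The height of a binary tree. -/
def BinTree.height : BinTree → ℕ
  | .leaf => 0
  | .node l r => max l.height r.height + 1

/-- `tcount ℓ k` is the number of binary trees with `ℓ` leaves and height at most `k`. -/
noncomputable def tcount (ℓ k : ℕ) : ℕ :=
  Nat.card {T : BinTree // T.leaves = ℓ ∧ T.height ≤ k}

/-- `fcount k n` is the number of binary forests (finite sequences of binary trees) with `n`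
leaves in total, each tree of height at most `k`. -/
noncomputable def fcount (k n : ℕ) : ℕ :=
  Nat.card {l : List BinTree // (l.map BinTree.leaves).sum = n ∧ ∀ T ∈ l, T.height ≤ k}

/-- `fcount k`, extended by `0` to negative integer arguments. -/
noncomputable def fext (k : ℕ) (m : ℤ) : ℕ :=
  if 0 ≤ m then fcount k m.toNat else 0


open Filter

lemma BinTree.one_le_leaves (T : BinTree) : 1 ≤ T.leaves := by
  induction T with
  | leaf => simp [leaves]
  | node l r hl hr => simp [leaves]; omega

lemma BinTree.leaves_le_two_pow (T : BinTree) : T.leaves ≤ 2 ^ T.height := by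
  induction T with
  | leaf => simp [leaves, height]
  | node l r hl hr =>
      have h1 : 2 ^ l.height ≤ 2 ^ (max l.height r.height) :=
        Nat.pow_le_pow_right (by norm_num) (le_max_left _ _)
      have h2 : 2 ^ r.height ≤ 2 ^ (max l.height r.height) :=
        Nat.pow_le_pow_right (by norm_num) (le_max_right _ _)
      simp only [leaves, height, pow_succ]
      omega

lemma BinTree.eq_leaf_of_leaves_eq_one (T : BinTree) (h : T.leaves = 1) : T = .leaf := by
  cases T with
  | leaf => rfl
  | node l r =>
      have := l.one_le_leaves; have := r.one_le_leaves
      simp [leaves] at h; omega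

lemma finite_trees (k : ℕ) : {T : BinTree | T.height ≤ k}.Finite := by
  induction k with
  | zero =>
      apply Set.Finite.subset (Set.finite_singleton BinTree.leaf)
      rintro T hT
      cases T with
      | leaf => rfl
      | node l r => simp [BinTree.height] at hT
  | succ k ih =>
      apply Set.Finite.subset
        (Set.Finite.insert BinTree.leaf
          (Set.Finite.image (fun p : BinTree × BinTree => BinTree.node p.1 p.2)
            (ih.prod ih)))
      rintro T hT
      cases T with
      | leaf => exact Set.mem_insert _ _
      | node l r =>
          simp only [BinTree.height, Set.mem_setOf_eq] at hT
          exact Set.mem_insert_of_mem _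
            ⟨(l, r), ⟨by simp at hT ⊢; omega, by simp at hT ⊢; omega⟩, rfl⟩

instance tfin (ℓ k : ℕ) : Finite {T : BinTree // T.leaves = ℓ ∧ T.height ≤ k} := by
  have : {T : BinTree | T.leaves = ℓ ∧ T.height ≤ k}.Finite :=
    (finite_trees k).subset (fun T hT => hT.2)
  exact this.to_subtype

lemma List.length_le_sum_map_leaves (l : List BinTree) :
    l.length ≤ (l.map BinTree.leaves).sum := by
  induction l with
  | nil => simp
  | cons T l ih => have := T.one_le_leaves; simp; omega

instance ffin (k n : ℕ) :
    Finite {l : List BinTree // (l.map BinTree.leaves).sum = n ∧ ∀ T ∈ l, T.height ≤ k} := by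
  have hfin : {l : List BinTree | (l.map BinTree.leaves).sum = n ∧ ∀ T ∈ l, T.height ≤ k}.Finite := by
    have : Finite {T : BinTree // T.height ≤ k} := ((finite_trees k).to_subtype)
    apply Set.Finite.subset
      (Set.Finite.image (fun l : List {T : BinTree // T.height ≤ k} => l.map Subtype.val)
        (List.finite_length_le {T : BinTree // T.height ≤ k} n))
    rintro l ⟨hsum, hht⟩
    refine ⟨l.attach.map (fun T => ⟨T.1, hht T.1 T.2⟩), ?_, ?_⟩
    · simp only [Set.mem_setOf_eq, List.length_map, List.length_attach]
      calc l.length ≤ (l.map BinTree.leaves).sum := l.length_le_sum_map_leaves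
        _ = n := hsum
    · simp [List.map_map, Function.comp]
  exact hfin.to_subtype

lemma fcount_zero (k : ℕ) : fcount k 0 = 1 := by
  have : Unique {l : List BinTree // (l.map BinTree.leaves).sum = 0 ∧ ∀ T ∈ l, T.height ≤ k} := by
    refine ⟨⟨⟨[], by simp⟩⟩, ?_⟩
    rintro ⟨l, hsum, _⟩
    ext1
    cases l with
    | nil => rfl
    | cons T l => have := T.one_le_leaves; simp at hsum; omega
  exact Nat.card_unique

lemma tcount_one (k : ℕ) : tcount 1 k = 1 := by
  have : Unique {T : BinTree // T.leaves = 1 ∧ T.height ≤ k} := by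
    refine ⟨⟨⟨.leaf, by simp [BinTree.leaves, BinTree.height]⟩⟩, ?_⟩
    rintro ⟨T, hl, _⟩
    ext1
    exact T.eq_leaf_of_leaves_eq_one hl
  exact Nat.card_unique

lemma Nat.card_sigma' {ι : Type*} [Fintype ι] (f : ι → Type*) [∀ i, Finite (f i)] :
    Nat.card ((i : ι) × f i) = ∑ i, Nat.card (f i) := by
  have : ∀ i, Fintype (f i) := fun i => Fintype.ofFinite _
  classical
  simp [Nat.card_eq_fintype_card, Fintype.card_sigma]

lemma ffin' (k n ℓ : ℕ) :
    Finite {l : List BinTree // ℓ + (l.map BinTree.leaves).sum = n ∧ ∀ T ∈ l, T.height ≤ k} := by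
  apply Finite.of_injective
    (fun x : {l : List BinTree // ℓ + (l.map BinTree.leaves).sum = n ∧ ∀ T ∈ l, T.height ≤ k} =>
      (⟨x.1, by have := x.2.1; constructor; omega; exact x.2.2⟩ :
        {l : List BinTree // (l.map BinTree.leaves).sum = n - ℓ ∧ ∀ T ∈ l, T.height ≤ k}))
  intro a b hab
  simp only [Subtype.mk.injEq] at hab
  exact Subtype.ext hab

lemma card_shift (k n ℓ : ℕ) (hℓ : 1 ≤ ℓ) :
    Nat.card {l : List BinTree // ℓ + (l.map BinTree.leaves).sum = n ∧ ∀ T ∈ l, T.height ≤ k}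
      = fext k ((n : ℤ) - ℓ) := by
  by_cases h : ℓ ≤ n
  · have : fext k ((n : ℤ) - ℓ) = fcount k (n - ℓ) := by
      unfold fext
      rw [if_pos (by omega)]
      congr 1
      omega
    rw [this]
    apply Nat.card_congr
    apply Equiv.subtypeEquivRight
    intro l
    constructor
    · rintro ⟨h1, h2⟩; exact ⟨by omega, h2⟩
    · rintro ⟨h1, h2⟩; exact ⟨by omega, h2⟩
  · have he : IsEmpty {l : List BinTree // ℓ + (l.map BinTree.leaves).sum = n ∧ ∀ T ∈ l, T.height ≤ k} := by
      constructor; rintro ⟨l, h1, -⟩; omega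
    rw [Nat.card_of_isEmpty]
    unfold fext
    rw [if_neg (by omega)]

lemma fcount_rec (k n : ℕ) (hn : 1 ≤ n) :
    (fcount k n : ℤ) = ∑ ℓ ∈ Finset.Icc 1 (2 ^ k), (tcount ℓ k : ℤ) * fext k ((n : ℤ) - ℓ) := by
  classical
  -- the bijection
  set S := Finset.Icc 1 (2 ^ k) with hS
  have key : fcount k n = ∑ ℓ ∈ S, tcount ℓ k * fext k ((n : ℤ) - ℓ) := by
    have hbij : Nat.card
        ((ℓ : S) × ({T : BinTree // T.leaves = ℓ.1 ∧ T.height ≤ k} ×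
          {l : List BinTree // ℓ.1 + (l.map BinTree.leaves).sum = n ∧ ∀ T ∈ l, T.height ≤ k}))
        = fcount k n := by
      apply Nat.card_eq_of_bijective
        (fun x => ⟨x.2.1.1 :: x.2.2.1, by
          simp only [List.map_cons, List.sum_cons, x.2.1.2.1]
          exact ⟨x.2.2.2.1, by
            intro T hT
            rcases List.mem_cons.1 hT with h | h
            · subst h; exact x.2.1.2.2
            · exact x.2.2.2.2 T h⟩⟩)
      constructor
      · rintro ⟨⟨ℓ₁, hℓ₁⟩, ⟨T₁, hT₁⟩, ⟨l₁, hl₁⟩⟩ ⟨⟨ℓ₂, hℓ₂⟩, ⟨T₂, hT₂⟩, ⟨l₂, hl₂⟩⟩ h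
        simp only [Subtype.mk.injEq, List.cons.injEq] at h
        obtain ⟨hT, hl⟩ := h
        have hℓ : ℓ₁ = ℓ₂ := by
          rw [← show T₁.leaves = ℓ₁ from hT₁.1, ← show T₂.leaves = ℓ₂ from hT₂.1, hT]
        subst hℓ; subst hT; subst hl
        rfl
      · rintro ⟨l, hsum, hht⟩
        cases l with
        | nil => simp at hsum; omega
        | cons T l' =>
            have h1 : 1 ≤ T.leaves := T.one_le_leaves
            have h2 : T.leaves ≤ 2 ^ k := by
              calc T.leaves ≤ 2 ^ T.height := T.leaves_le_two_pow
                _ ≤ 2 ^ k := Nat.pow_le_pow_right (by norm_num) (hht T (by simp))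
            simp only [List.map_cons, List.sum_cons] at hsum
            refine ⟨⟨⟨T.leaves, Finset.mem_Icc.2 ⟨h1, h2⟩⟩,
              ⟨T, rfl, hht T (by simp)⟩,
              ⟨l', hsum, fun U hU => hht U (by simp [hU])⟩⟩, rfl⟩
    have : ∀ ℓ : S, Finite ({T : BinTree // T.leaves = ℓ.1 ∧ T.height ≤ k} ×
          {l : List BinTree // ℓ.1 + (l.map BinTree.leaves).sum = n ∧ ∀ T ∈ l, T.height ≤ k}) := by
      intro ℓ
      have := ffin' k n ℓ.1
      infer_instance
    rw [Nat.card_sigma'] at hbij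
    rw [← hbij]
    rw [← Finset.sum_coe_sort S]
    congr 1
    funext ℓ
    have := ffin' k n ℓ.1
    rw [Nat.card_prod, card_shift k n ℓ.1 (Finset.mem_Icc.1 ℓ.2).1]
    rfl
  rw [key]
  push_cast
  rfl
open Filter

lemma renewal_tendsto {L : ℕ} (hL : 1 ≤ L) (b : ℕ → ℝ) (hb : ∀ ℓ, 0 ≤ b ℓ)
    (hb1 : 0 < b 1) (hsum : ∑ ℓ ∈ Finset.Icc 1 L, b ℓ = 1)
    (u : ℕ → ℝ) (hu : ∀ n, 0 < u n)
    (hrec : ∀ n, L ≤ n → u n = ∑ ℓ ∈ Finset.Icc 1 L, b ℓ * u (n - ℓ)) :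
    ∃ lam : ℝ, 0 < lam ∧ Tendsto u atTop (nhds lam) := by
  set c := b 1 with hc
  have h1L : (1 : ℕ) ∈ Finset.Icc 1 L := Finset.mem_Icc.2 ⟨le_refl 1, hL⟩
  have hc1 : c ≤ 1 := by
    rw [← hsum]
    exact Finset.single_le_sum (fun i _ => hb i) h1L
  have hcpos : 0 < c := hb1
  have hrne : (Finset.range L).Nonempty := ⟨0, Finset.mem_range.2 (by omega)⟩
  set M : ℕ → ℝ := fun n => (Finset.range L).sup' hrne (fun i => u (n + i)) with hM
  set m : ℕ → ℝ := fun n => (Finset.range L).inf' hrne (fun i => u (n + i)) with hm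
  -- window bounds
  have hW : ∀ j n, m n ≤ u (n + j) ∧ u (n + j) ≤ M n := by
    intro j
    induction j using Nat.strong_induction_on with
    | _ j ih =>
      intro n
      by_cases hj : j < L
      · exact ⟨Finset.inf'_le _ (Finset.mem_range.2 hj),
          Finset.le_sup' (fun i => u (n + i)) (Finset.mem_range.2 hj)⟩
      · push_neg at hj
        have hnj : L ≤ n + j := by omega
        have hidx : ∀ ℓ ∈ Finset.Icc 1 L, n + j - ℓ = n + (j - ℓ) := by
          intro ℓ hℓ
          have := Finset.mem_Icc.1 hℓ
          omega
        rw [hrec (n + j) hnj]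
        constructor
        · calc m n = (∑ ℓ ∈ Finset.Icc 1 L, b ℓ) * m n := by rw [hsum, one_mul]
            _ = ∑ ℓ ∈ Finset.Icc 1 L, b ℓ * m n := by rw [Finset.sum_mul]
            _ ≤ ∑ ℓ ∈ Finset.Icc 1 L, b ℓ * u (n + j - ℓ) := by
                apply Finset.sum_le_sum
                intro ℓ hℓ
                have hmem := Finset.mem_Icc.1 hℓ
                have : m n ≤ u (n + j - ℓ) := by
                  rw [hidx ℓ hℓ]
                  exact (ih (j - ℓ) (by omega) n).1
                exact mul_le_mul_of_nonneg_left this (hb ℓ)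
        · calc ∑ ℓ ∈ Finset.Icc 1 L, b ℓ * u (n + j - ℓ)
              ≤ ∑ ℓ ∈ Finset.Icc 1 L, b ℓ * M n := by
                apply Finset.sum_le_sum
                intro ℓ hℓ
                have hmem := Finset.mem_Icc.1 hℓ
                have : u (n + j - ℓ) ≤ M n := by
                  rw [hidx ℓ hℓ]
                  exact (ih (j - ℓ) (by omega) n).2
                exact mul_le_mul_of_nonneg_left this (hb ℓ)
            _ = M n := by rw [← Finset.sum_mul, hsum, one_mul]
  have hmM : ∀ n, m n ≤ M n := fun n => by
    have h := hW 0 n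
    simpa using le_trans h.1 h.2
  have hm_mono : Monotone m := by
    apply monotone_nat_of_le_succ
    intro n
    apply Finset.le_inf' hrne
    intro i _
    have := (hW (1 + i) n).1
    rwa [← Nat.add_assoc] at this
  have hM_anti : Antitone M := by
    apply antitone_nat_of_succ_le
    intro n
    apply Finset.sup'_le hrne
    intro i _
    have := (hW (1 + i) n).2
    rwa [← Nat.add_assoc] at this
  -- splitting off the first term of the recurrence
  have hsplit : ∀ nn, L ≤ nn →
      u nn = c * u (nn - 1) + ∑ ℓ ∈ Finset.Icc 2 L, b ℓ * u (nn - ℓ) := by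
    intro nn hnn
    rw [hrec nn hnn]
    have : Finset.Icc 1 L = insert 1 (Finset.Icc 2 L) := by
      ext x
      simp only [Finset.mem_Icc, Finset.mem_insert]
      omega
    rw [this, Finset.sum_insert (by simp)]
  have htail : ∑ ℓ ∈ Finset.Icc 2 L, b ℓ = 1 - c := by
    have : Finset.Icc 1 L = insert 1 (Finset.Icc 2 L) := by
      ext x
      simp only [Finset.mem_Icc, Finset.mem_insert]
      omega
    rw [this, Finset.sum_insert (by simp)] at hsum
    linarith
  have htail_lb : ∀ nn n, L ≤ nn → n ≤ nn - L →
      (1 - c) * m n ≤ ∑ ℓ ∈ Finset.Icc 2 L, b ℓ * u (nn - ℓ) := by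
    intro nn n hnn hn
    calc (1 - c) * m n = (∑ ℓ ∈ Finset.Icc 2 L, b ℓ) * m n := by rw [htail]
      _ = ∑ ℓ ∈ Finset.Icc 2 L, b ℓ * m n := by rw [Finset.sum_mul]
      _ ≤ _ := by
          apply Finset.sum_le_sum
          intro ℓ hℓ
          have hmem := Finset.mem_Icc.1 hℓ
          have : m n ≤ u (nn - ℓ) := by
            rw [show nn - ℓ = n + (nn - ℓ - n) by omega]
            exact (hW _ n).1
          exact mul_le_mul_of_nonneg_left this (hb ℓ)
  have htail_ub : ∀ nn n, L ≤ nn → n ≤ nn - L →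
      ∑ ℓ ∈ Finset.Icc 2 L, b ℓ * u (nn - ℓ) ≤ (1 - c) * M n := by
    intro nn n hnn hn
    calc ∑ ℓ ∈ Finset.Icc 2 L, b ℓ * u (nn - ℓ)
        ≤ ∑ ℓ ∈ Finset.Icc 2 L, b ℓ * M n := by
          apply Finset.sum_le_sum
          intro ℓ hℓ
          have hmem := Finset.mem_Icc.1 hℓ
          have : u (nn - ℓ) ≤ M n := by
            rw [show nn - ℓ = n + (nn - ℓ - n) by omega]
            exact (hW _ n).2
          exact mul_le_mul_of_nonneg_left this (hb ℓ)
      _ = (1 - c) * M n := by rw [← Finset.sum_mul, htail]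
  -- the key contraction estimates
  have hA : ∀ j n, c ^ (j + 1) * u (n + (L - 1)) + (1 - c ^ (j + 1)) * m n ≤ u (n + L + j) := by
    intro j
    induction j with
    | zero =>
        intro n
        have h1 : n + L + 0 - 1 = n + (L - 1) := by omega
        rw [hsplit (n + L + 0) (by omega), h1, pow_one]
        have := htail_lb (n + L + 0) n (by omega) (by omega)
        linarith
    | succ j ih =>
        intro n
        have h1 : n + L + (j + 1) - 1 = n + L + j := by omega
        rw [hsplit (n + L + (j + 1)) (by omega), h1]
        have h2 := mul_le_mul_of_nonneg_left (ih n) hcpos.le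
        have h3 := htail_lb (n + L + (j + 1)) n (by omega) (by omega)
        have : c * (c ^ (j + 1) * u (n + (L - 1)) + (1 - c ^ (j + 1)) * m n) + (1 - c) * m n
            = c ^ (j + 1 + 1) * u (n + (L - 1)) + (1 - c ^ (j + 1 + 1)) * m n := by ring
        linarith
  have hB : ∀ j n, u (n + L + j) ≤ c ^ (j + 1) * u (n + (L - 1)) + (1 - c ^ (j + 1)) * M n := by
    intro j
    induction j with
    | zero =>
        intro n
        have h1 : n + L + 0 - 1 = n + (L - 1) := by omega
        rw [hsplit (n + L + 0) (by omega), h1, pow_one]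
        have := htail_ub (n + L + 0) n (by omega) (by omega)
        linarith
    | succ j ih =>
        intro n
        have h1 : n + L + (j + 1) - 1 = n + L + j := by omega
        rw [hsplit (n + L + (j + 1)) (by omega), h1]
        have h2 := mul_le_mul_of_nonneg_left (ih n) hcpos.le
        have h3 := htail_ub (n + L + (j + 1)) n (by omega) (by omega)
        have : c * (c ^ (j + 1) * u (n + (L - 1)) + (1 - c ^ (j + 1)) * M n) + (1 - c) * M n
            = c ^ (j + 1 + 1) * u (n + (L - 1)) + (1 - c ^ (j + 1 + 1)) * M n := by ring
        linarith
  set D : ℕ → ℝ := fun n => M n - m n with hD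
  have hD_nonneg : ∀ n, 0 ≤ D n := fun n => by simpa [hD] using hmM n
  have hD_anti : Antitone D := fun a bb h => by
    simp only [hD]
    have := hM_anti h
    have := hm_mono h
    linarith
  set q : ℝ := 1 - c ^ L with hq
  have hq0 : 0 ≤ q := by
    have : c ^ L ≤ 1 := pow_le_one₀ hcpos.le hc1
    simp [hq]; linarith
  have hq1 : q < 1 := by
    have : 0 < c ^ L := pow_pos hcpos L
    simp [hq]; linarith
  have hcontr : ∀ n, D (n + L) ≤ q * D n := by
    intro n
    have hustar_lb : m n ≤ u (n + (L - 1)) := (hW (L - 1) n).1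
    have hustar_ub : u (n + (L - 1)) ≤ M n := (hW (L - 1) n).2
    have hmlb : c ^ L * u (n + (L - 1)) + (1 - c ^ L) * m n ≤ m (n + L) := by
      apply Finset.le_inf' hrne
      intro i hi
      have hiL := Finset.mem_range.1 hi
      have h1 : c ^ L ≤ c ^ (i + 1) := pow_le_pow_of_le_one hcpos.le hc1 (by omega)
      have h2 := hA i n
      have h3 : n + L + i = n + L + i := rfl
      nlinarith [hA i n]
    have hMub : M (n + L) ≤ c ^ L * u (n + (L - 1)) + (1 - c ^ L) * M n := by
      apply Finset.sup'_le hrne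
      intro i hi
      have hiL := Finset.mem_range.1 hi
      have h1 : c ^ L ≤ c ^ (i + 1) := pow_le_pow_of_le_one hcpos.le hc1 (by omega)
      nlinarith [hB i n]
    simp only [hD, hq]
    linarith
  -- D tends to 0
  have hDgeom : ∀ i, D (i * L) ≤ q ^ i * D 0 := by
    intro i
    induction i with
    | zero => simp
    | succ i ih =>
        have : (i + 1) * L = i * L + L := by ring
        rw [this]
        calc D (i * L + L) ≤ q * D (i * L) := hcontr (i * L)
          _ ≤ q * (q ^ i * D 0) := mul_le_mul_of_nonneg_left ih hq0
          _ = q ^ (i + 1) * D 0 := by ring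
  have hDbdd : BddBelow (Set.range D) := ⟨0, by rintro x ⟨n, rfl⟩; exact hD_nonneg n⟩
  have hDtend : Tendsto D atTop (nhds (⨅ n, D n)) := tendsto_atTop_ciInf hD_anti hDbdd
  have hDinf0 : (⨅ n, D n) = 0 := by
    have hle : ∀ i, (⨅ n, D n) ≤ q ^ i * D 0 := fun i =>
      le_trans (ciInf_le hDbdd (i * L)) (hDgeom i)
    have hgeo : Tendsto (fun i : ℕ => q ^ i * D 0) atTop (nhds 0) := by
      have := (tendsto_pow_atTop_nhds_zero_of_lt_one hq0 hq1).mul_const (D 0)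
      simpa using this
    have h1 : (⨅ n, D n) ≤ 0 := ge_of_tendsto hgeo (Filter.Eventually.of_forall hle)
    have h2 : 0 ≤ (⨅ n, D n) := le_ciInf hD_nonneg
    linarith
  rw [hDinf0] at hDtend
  -- m tends to its supremum lam
  have hmbdd : BddAbove (Set.range m) := by
    refine ⟨M 0, ?_⟩
    rintro x ⟨n, rfl⟩
    exact le_trans (hmM n) (hM_anti (Nat.zero_le n))
  have hmtend : Tendsto m atTop (nhds (⨆ n, m n)) := tendsto_atTop_ciSup hm_mono hmbdd
  set lam := ⨆ n, m n with hlam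
  have hMtend : Tendsto M atTop (nhds lam) := by
    have : M = fun n => m n + D n := by funext n; simp [hD]
    rw [this]
    simpa using hmtend.add hDtend
  refine ⟨lam, ?_, ?_⟩
  · have hm0 : 0 < m 0 := by
      apply (Finset.lt_inf'_iff hrne).2
      intro i _
      exact hu (0 + i)
    have : m 0 ≤ lam := le_ciSup hmbdd 0
    linarith
  · apply tendsto_of_tendsto_of_tendsto_of_le_of_le hmtend hMtend
    · intro n
      simpa using (hW 0 n).1
    · intro n
      simpa using (hW 0 n).2

lemma fcount_pos (k n : ℕ) : 0 < fcount k n := by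
  have : Nonempty {l : List BinTree // (l.map BinTree.leaves).sum = n ∧ ∀ T ∈ l, T.height ≤ k} := by
    refine ⟨⟨List.replicate n .leaf, ?_, ?_⟩⟩
    · simp [List.map_replicate, BinTree.leaves]
    · intro T hT
      rw [List.eq_of_mem_replicate hT]
      simp [BinTree.height]
  exact Nat.card_pos

lemma root_exists_unique (k : ℕ) :
    ∃! p : ℝ, 0 < p ∧ ∑ ℓ ∈ Finset.Icc 1 (2 ^ k), (tcount ℓ k : ℝ) * p ^ ℓ = 1 := by
  set g : ℝ → ℝ := fun x => ∑ ℓ ∈ Finset.Icc 1 (2 ^ k), (tcount ℓ k : ℝ) * x ^ ℓ with hg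
  have h1mem : (1 : ℕ) ∈ Finset.Icc 1 (2 ^ k) := Finset.mem_Icc.2 ⟨le_refl 1, Nat.one_le_two_pow⟩
  have hcont : Continuous g := by
    apply continuous_finset_sum
    intro i _
    exact continuous_const.mul (continuous_pow i)
  have hg0 : g 0 = 0 := by
    apply Finset.sum_eq_zero
    intro ℓ hℓ
    have : 1 ≤ ℓ := (Finset.mem_Icc.1 hℓ).1
    rw [zero_pow (by omega), mul_zero]
  have hg1 : 1 ≤ g 1 := by
    have h := Finset.single_le_sum
      (f := fun ℓ => (tcount ℓ k : ℝ) * (1 : ℝ) ^ ℓ)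
      (fun i _ => by positivity) h1mem
    simp only [hg]
    simpa [tcount_one] using h
  have hmono : StrictMonoOn g (Set.Ici 0) := by
    intro x hx y hy hxy
    apply Finset.sum_lt_sum
    · intro ℓ hℓ
      have : x ^ ℓ ≤ y ^ ℓ := pow_le_pow_left₀ hx hxy.le ℓ
      exact mul_le_mul_of_nonneg_left this (by positivity)
    · refine ⟨1, h1mem, ?_⟩
      simp only [tcount_one, Nat.cast_one, one_mul, pow_one]
      exact hxy
  have hex : ∃ p ∈ Set.Icc (0:ℝ) 1, g p = 1 := by
    have := intermediate_value_Icc (by norm_num : (0:ℝ) ≤ 1) hcont.continuousOn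
    have h1 : (1:ℝ) ∈ Set.Icc (g 0) (g 1) := by
      rw [hg0]
      exact ⟨by norm_num, hg1⟩
    obtain ⟨p, hp1, hp2⟩ := this h1
    exact ⟨p, hp1, hp2⟩
  obtain ⟨p, hpmem, hproot⟩ := hex
  have hppos : 0 < p := by
    rcases lt_or_eq_of_le hpmem.1 with h | h
    · exact h
    · exfalso; rw [← h, hg0] at hproot; norm_num at hproot
  refine ⟨p, ⟨hppos, hproot⟩, ?_⟩
  rintro q ⟨hqpos, hqroot⟩
  apply hmono.injOn (Set.mem_Ici.2 hqpos.le) (Set.mem_Ici.2 hppos.le)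
  have hq' : g q = 1 := hqroot
  rw [hq', hproot]

lemma ratio_tendsto (k : ℕ) (p : ℝ) (hp : 0 < p)
    (hroot : ∑ ℓ ∈ Finset.Icc 1 (2 ^ k), (tcount ℓ k : ℝ) * p ^ ℓ = 1) :
    Filter.Tendsto (fun n : ℕ => (fcount k (n - 1) : ℝ) / fcount k n)
      Filter.atTop (nhds p) := by
  set L := 2 ^ k with hL
  set b : ℕ → ℝ := fun ℓ => (tcount ℓ k : ℝ) * p ^ ℓ with hb
  set u : ℕ → ℝ := fun n => (fcount k n : ℝ) * p ^ n with hu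
  have hbnn : ∀ ℓ, 0 ≤ b ℓ := fun ℓ => by positivity
  have hb1 : 0 < b 1 := by simp [hb, tcount_one]; positivity
  have hupos : ∀ n, 0 < u n := fun n => by
    have := fcount_pos k n
    simp only [hu]
    positivity
  have hurec : ∀ n, L ≤ n → u n = ∑ ℓ ∈ Finset.Icc 1 L, b ℓ * u (n - ℓ) := by
    intro n hn
    have hrecn := fcount_rec k n (le_trans Nat.one_le_two_pow hn)
    -- convert to a real recurrence on fcount
    have hfr : (fcount k n : ℝ) = ∑ ℓ ∈ Finset.Icc 1 L, (tcount ℓ k : ℝ) * fcount k (n - ℓ) := by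
      have : ∀ ℓ ∈ Finset.Icc 1 L, (fext k ((n : ℤ) - ℓ) : ℤ) = (fcount k (n - ℓ) : ℤ) := by
        intro ℓ hℓ
        have hmem := Finset.mem_Icc.1 hℓ
        unfold fext
        rw [if_pos (by omega)]
        have h2 : ((n : ℤ) - ℓ).toNat = n - ℓ := by omega
        rw [h2]
      rw [Finset.sum_congr rfl (fun ℓ hℓ => by rw [this ℓ hℓ])] at hrecn
      exact_mod_cast hrecn
    simp only [hu, hb]
    rw [hfr, Finset.sum_mul]
    apply Finset.sum_congr rfl
    intro ℓ hℓ
    have hmem := Finset.mem_Icc.1 hℓ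
    have hpow : p ^ (n - ℓ) * p ^ ℓ = p ^ n := by
      rw [← pow_add]
      congr 1
      omega
    calc (tcount ℓ k : ℝ) * (fcount k (n - ℓ)) * p ^ n
        = (tcount ℓ k : ℝ) * (fcount k (n - ℓ)) * (p ^ (n - ℓ) * p ^ ℓ) := by rw [hpow]
      _ = (tcount ℓ k : ℝ) * p ^ ℓ * ((fcount k (n - ℓ)) * p ^ (n - ℓ)) := by ring
  obtain ⟨lam, hlampos, hlamtend⟩ :=
    renewal_tendsto (Nat.one_le_two_pow) b hbnn hb1 hroot u hupos hurec
  have hshift : Filter.Tendsto (fun n : ℕ => u (n - 1)) Filter.atTop (nhds lam) :=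
    hlamtend.comp (Filter.tendsto_sub_atTop_nat 1)
  have hdiv : Filter.Tendsto (fun n : ℕ => p * (u (n - 1) / u n)) Filter.atTop (nhds p) := by
    have := (hshift.div hlamtend (ne_of_gt hlampos)).const_mul p
    have h2 : p * (lam / lam) = p := by
      rw [div_self (ne_of_gt hlampos), mul_one]
    rwa [h2] at this
  apply hdiv.congr'
  filter_upwards [Filter.eventually_ge_atTop 1] with n hn
  have hfpos : (0 : ℝ) < fcount k n := by exact_mod_cast fcount_pos k n
  have hppow : (0 : ℝ) < p ^ (n - 1) := pow_pos hp _
  simp only [hu]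
  have hpn : p ^ n = p ^ (n - 1) * p := by
    rw [← pow_succ]
    congr 1
    omega
  rw [hpn]
  field_simp

/-- The forest counts satisfy `f_n = Σ_{ℓ=1}^{2^k} t_{ℓ,k} f_{n−ℓ}`, and
`f_{n−1}/f_n` converges to the unique positive root `p` of `Σ_{ℓ=1}^{2^k} t_{ℓ,k} p^ℓ = 1`. -/
theorem forest_count_recurrence_and_ratio_limit (k : ℕ) :
    (∀ n : ℕ, 1 ≤ n →
      (fcount k n : ℤ) = ∑ ℓ ∈ Finset.Icc 1 (2 ^ k), (tcount ℓ k : ℤ) * fext k ((n : ℤ) - ℓ)) ∧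
    (∃! p : ℝ, 0 < p ∧ ∑ ℓ ∈ Finset.Icc 1 (2 ^ k), (tcount ℓ k : ℝ) * p ^ ℓ = 1) ∧
    ∀ p : ℝ, 0 < p → (∑ ℓ ∈ Finset.Icc 1 (2 ^ k), (tcount ℓ k : ℝ) * p ^ ℓ = 1) →
      Filter.Tendsto (fun n : ℕ => (fcount k (n - 1) : ℝ) / fcount k n)
        Filter.atTop (nhds p) := by
  exact ⟨fun n hn => fcount_rec k n hn, root_exists_unique k,
    fun p hp hroot => ratio_tendsto k p hp hroot⟩
end

section
/- Given any group G, an endomorphism φ of G, and an element c ∈ G satisfying φ²(g) = c^{-1} φ(g) c for all g ∈ G, there exists a unique group homomorphism π : F → G with π(x_0) = c and π ∘ σ = φ ∘ π, where σ is the shift endomorphism of F. -/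
lemma key_conj {G : Type} [Group G] (φ : G →* G) (c : G)
    (hφ : ∀ g : G, φ (φ g) = c⁻¹ * φ g * c) {n k : ℕ} (hk : k < n) :
    (φ^[k] c)⁻¹ * φ^[n] c * φ^[k] c = φ^[n+1] c := by
  have h : ∀ m : ℕ, ∀ g : G, φ^[m+2] g = (φ^[m] c)⁻¹ * φ^[m+1] g * φ^[m] c := by
    intro m
    induction m with
    | zero => intro g; simpa using hφ g
    | succ m ih =>
      intro g
      have : φ^[m+3] g = φ (φ^[m+2] g) := by
        rw [← Function.iterate_succ_apply' φ (m+2)]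
      rw [show m+1+2 = m+3 from rfl, this, ih g]
      simp only [map_mul, map_inv]
      rw [← Function.iterate_succ_apply' φ m, ← Function.iterate_succ_apply' φ (m+1),
        show (m+1).succ = m+2 from rfl, show m.succ = m+1 from rfl, ← ih g]
  have hg := h k (φ^[n - k - 1] c)
  have h1 : φ^[k+1] (φ^[n-k-1] c) = φ^[n] c := by
    rw [← Function.iterate_add_apply]; congr 1; omega
  have h2 : φ^[k+2] (φ^[n-k-1] c) = φ^[n+1] c := by
    rw [← Function.iterate_add_apply]; congr 1; omega
  rw [h1, h2] at hg
  exact hg.symm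

/-- Universal property of `(F, σ, x_0)`: for any group `G` with a conjugacy-idempotent
endomorphism `φ` and conjugator `c` (i.e. `φ²(g) = c⁻¹ φ(g) c` for all `g`), there is a
unique homomorphism `π : F → G` with `π(x_0) = c` and `π ∘ σ = φ ∘ π`, where `σ` is the
shift endomorphism of `F` (sending `x_n` to `x_{n+1}`). -/
theorem thompsonF_universal_conjugacy_idempotent
    (σ : ThompsonF →* ThompsonF) (hσ : ∀ n : ℕ, σ (x n) = x (n + 1))
    (G : Type) [Group G] (φ : G →* G) (c : G)
    (hφ : ∀ g : G, φ (φ g) = c⁻¹ * φ g * c) :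
    ∃! π : ThompsonF →* G, π (x 0) = c ∧ ∀ f : ThompsonF, π (σ f) = φ (π f) := by
  set f : ℕ → G := fun n => φ^[n] c with hf
  have hrels : ∀ r ∈ thompsonRels, FreeGroup.lift f r = 1 := by
    rintro r ⟨n, k, hk, rfl⟩
    simp only [map_mul, map_inv, FreeGroup.lift_apply_of, hf]
    rw [← key_conj φ c hφ hk]; group
  set π := PresentedGroup.toGroup hrels with hπ
  have hπof : ∀ n, π (x n) = f n := fun n => PresentedGroup.toGroup.of hrels
  have hcomm : ∀ g : ThompsonF, π (σ g) = φ (π g) := by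
    intro g
    have : π.comp σ = φ.comp π := by
      apply PresentedGroup.ext
      intro n
      show π (σ (x n)) = φ (π (x n))
      rw [hσ, hπof, hπof]
      simp only [hf]
      exact Function.iterate_succ_apply' φ n c
    exact DFunLike.congr_fun this g
  refine ⟨π, ⟨by simpa [hf] using hπof 0, hcomm⟩, ?_⟩
  rintro π' ⟨h0, hc⟩
  have hgen : ∀ n, π' (x n) = f n := by
    intro n
    induction n with
    | zero => simpa [hf] using h0
    | succ n ih =>
      rw [← hσ n, hc, ih]
      simp only [hf]
      exact (Function.iterate_succ_apply' φ n c).symm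
  apply PresentedGroup.ext
  intro n
  rw [show (PresentedGroup.of n : ThompsonF) = x n from rfl, hgen, hπof]
end

section
/- Let s and t be elements of a group G and suppose every element of G is a product p q^{-1} with p, q in the submonoid M generated by s and t. If M has monoid presentation ⟨S | R⟩, then G has group presentation ⟨S | R⟩; in particular, since the positive monoid of F has presentation ⟨x_0, x_1, ... | x_n x_k = x_k x_{n+1}, k < n⟩ and every element of F is pq^{-1} with p, q positive, F has that same presentation as a group. -/
section helpers
variable {H : Type*} [Group H] (h : ℕ → H)
    (hrel : ∀ k n : ℕ, k < n → h n * h k = h k * h (n + 1))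

include hrel in
lemma auxA : ∀ l : List ℕ, ∀ j : ℕ, ∃ p q : List ℕ,
    (h j)⁻¹ * (l.map h).prod = (p.map h).prod * ((q.map h).prod)⁻¹ := by
  intro l
  induction l with
  | nil => intro j; exact ⟨[], [j], by simp⟩
  | cons m t ih =>
    intro j
    rcases lt_trichotomy j m with hjm | rfl | hmj
    · obtain ⟨p, q, hpq⟩ := ih j
      refine ⟨(m + 1) :: p, q, ?_⟩
      have e : (h j)⁻¹ * h m = h (m + 1) * (h j)⁻¹ := by
        have := hrel j m hjm
        rw [inv_mul_eq_iff_eq_mul, ← mul_assoc, ← this, mul_inv_cancel_right]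
      simp only [List.map_cons, List.prod_cons, ← mul_assoc, e]
      rw [mul_assoc (h (m+1)), hpq, ← mul_assoc]
    · exact ⟨t, [], by simp [← mul_assoc]⟩
    · obtain ⟨p, q, hpq⟩ := ih (j + 1)
      refine ⟨m :: p, q, ?_⟩
      have e : (h j)⁻¹ * h m = h m * (h (j + 1))⁻¹ := by
        have := hrel m j hmj
        rw [inv_mul_eq_iff_eq_mul, ← mul_assoc, this, mul_inv_cancel_right]
      simp only [List.map_cons, List.prod_cons, ← mul_assoc, e]
      rw [mul_assoc (h m), hpq, ← mul_assoc]

include hrel in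
lemma auxB : ∀ ql pl : List ℕ, ∃ p q : List ℕ,
    ((ql.map h).prod)⁻¹ * (pl.map h).prod = (p.map h).prod * ((q.map h).prod)⁻¹ := by
  intro ql
  induction ql with
  | nil => intro pl; exact ⟨pl, [], by simp⟩
  | cons j t ih =>
    intro pl
    obtain ⟨p₁, q₁, h₁⟩ := auxA h hrel pl j
    obtain ⟨p₂, q₂, h₂⟩ := ih p₁
    refine ⟨p₂, q₁ ++ q₂, ?_⟩
    simp only [List.map_cons, List.prod_cons, mul_inv_rev, List.map_append, List.prod_append]
    rw [mul_assoc, h₁, ← mul_assoc, h₂, mul_assoc]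

include hrel in
lemma auxFrac (a : H) (ha : a ∈ Subgroup.closure (Set.range h)) :
    ∃ p q : List ℕ, a = (p.map h).prod * ((q.map h).prod)⁻¹ := by
  induction ha using Subgroup.closure_induction with
  | mem y hy => obtain ⟨n, rfl⟩ := hy; exact ⟨[n], [], by simp⟩
  | one => exact ⟨[], [], by simp⟩
  | mul y z _ _ hy hz =>
    obtain ⟨p₁, q₁, rfl⟩ := hy
    obtain ⟨p₂, q₂, rfl⟩ := hz
    obtain ⟨p₃, q₃, h₃⟩ := auxB h hrel q₁ p₂
    refine ⟨p₁ ++ p₃, q₂ ++ q₃, ?_⟩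
    simp only [List.map_append, List.prod_append, mul_inv_rev]
    rw [mul_assoc, ← mul_assoc ((List.map h q₁).prod)⁻¹, h₃, ← mul_assoc, ← mul_assoc, mul_assoc]
  | inv y _ hy =>
    obtain ⟨p, q, rfl⟩ := hy
    exact ⟨q, p, by simp⟩

end helpers

/-- The generators of `ThompsonF` satisfy the defining relations. -/
lemma x_rel : ∀ k n : ℕ, k < n → x n * x k = x k * x (n + 1) := by
  intro k n hkn
  have h1 : PresentedGroup.mk thompsonRels
      (FreeGroup.of n * FreeGroup.of k * (FreeGroup.of k * FreeGroup.of (n + 1))⁻¹) = 1 := by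
    refine (QuotientGroup.eq_one_iff _).mpr ?_
    exact Subgroup.subset_normalClosure ⟨n, k, hkn, rfl⟩
  rw [map_mul, map_mul, map_inv, map_mul, mul_inv_eq_one] at h1
  exact h1

/-- A group of right fractions of a monoid inherits the monoid's presentation:
if a group `G` is generated by elements `x_n` satisfying the relations
`x_n x_k = x_k x_{n+1}` (`k < n`), every element of `G` is a fraction `p q⁻¹` with `p, q`
in the submonoid `M` generated by the `x_n`, and `M` has the corresponding monoid
presentation (any two words for the same element of `M` are related by the congruence
generated by the relations), then `G` has the group presentation
`⟨x_0, x_1, … | x_n x_k = x_k x_{n+1}⟩`, i.e. the canonical homomorphism from the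
presented group is an isomorphism.  In particular this applies to Thompson's group `F`. -/
theorem group_of_fractions_presentation (G : Type) [Group G] (g : ℕ → G)
    (hrel : ∀ k n : ℕ, k < n → g n * g k = g k * g (n + 1))
    (hfrac : ∀ h : G, ∃ p ∈ Submonoid.closure (Set.range g),
      ∃ q ∈ Submonoid.closure (Set.range g), h = p * q⁻¹)
    (hpres : ∀ l₁ l₂ : List ℕ, (l₁.map g).prod = (l₂.map g).prod →
      conGen thompsonMonRels (FreeMonoid.ofList l₁) (FreeMonoid.ofList l₂))
    (φ : ThompsonF →* G) (hφ : ∀ n : ℕ, φ (x n) = g n) :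
    Function.Bijective φ := by
  constructor
  · -- injective
    rw [injective_iff_map_eq_one]
    intro a ha
    -- write `a` as a fraction of positive words in the `x n`
    have hagen : a ∈ Subgroup.closure (Set.range x) := by
      have : Subgroup.closure (Set.range x) = ⊤ := by
        have hx : x = (PresentedGroup.of : ℕ → ThompsonF) := funext fun n => rfl
        rw [hx]
        exact PresentedGroup.closure_range_of thompsonRels
      simp [this]
    obtain ⟨l₁, l₂, rfl⟩ := auxFrac x x_rel a hagen
    have hφx : ∀ l : List ℕ, φ (l.map x).prod = (l.map g).prod := by
      intro l
      rw [map_list_prod, List.map_map]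
      congr 1
      exact List.map_congr_left fun n _ => hφ n
    have heq : (l₁.map g).prod = (l₂.map g).prod := by
      rw [map_mul, map_inv, mul_inv_eq_one] at ha
      rw [← hφx, ← hφx, ha]
    -- transfer the monoid congruence to equality in `ThompsonF`
    have hcon := hpres l₁ l₂ heq
    have hker : conGen thompsonMonRels ≤ Con.ker (FreeMonoid.lift x) := by
      refine Con.conGen_le.2 ?_
      rintro a b ⟨n, k, hkn, rfl, rfl⟩
      show FreeMonoid.lift x (FreeMonoid.of n * FreeMonoid.of k)
        = FreeMonoid.lift x (FreeMonoid.of k * FreeMonoid.of (n + 1))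
      simp only [map_mul, FreeMonoid.lift_eval_of]
      exact x_rel k n hkn
    have hxeq : (l₁.map x).prod = (l₂.map x).prod := by
      have h2 : FreeMonoid.lift x (FreeMonoid.ofList l₁)
          = FreeMonoid.lift x (FreeMonoid.ofList l₂) := hker hcon
      rwa [FreeMonoid.lift_ofList, FreeMonoid.lift_ofList] at h2
    rw [hxeq, mul_inv_cancel]
  · -- surjective
    intro b
    obtain ⟨p, hp, q, hq, rfl⟩ := hfrac b
    have hle : Submonoid.closure (Set.range g) ≤ φ.range.toSubmonoid := by
      rw [Submonoid.closure_le]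
      rintro _ ⟨n, rfl⟩
      exact ⟨x n, hφ n⟩
    obtain ⟨a, rfl⟩ := hle hp
    obtain ⟨b, rfl⟩ := hle hq
    exact ⟨a * b⁻¹, by rw [map_mul, map_inv]⟩
end
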